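/- arXiv:2605.17760 — 8 statements merged into one kernel-verified Lean document; each statement's English description precedes it below -/
import Mathlib

section
/- There is a universal constant C>0 such that the following holds. Let K be a Markov kernel on a finite state space U with K(u,u)≥1/2 for every u∈U, reversible with respect to a positive stationary probability distribution ν. For s∈U let w_t(u)=K^t(s,u)/ν(u) be the heat-kernel density from s. Then for every integer k≥1, Σ_{t=0}^{k−1} (Σ_{u,v∈U} ν(u)K(u,v)|w_t(u)−w_t(v)|)² ≤ C·log(1/ν(s)). Consequently there exists 0≤t<k with Σ_{u,v} ν(u)K(u,v)|w_t(u)−w_t(v)| ≤ C·√(log(1/ν(s))/k). -/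
/-!
Write `w_t` for the heat density from `s`; reversibility gives `w_{t+1} = K w_t`. The entropy
`∑ ν w log w` equals `log (1 / ν s)` at `t = 0` and is never negative. Since `x log x` exceeds its
tangent line at `b` by at least `(√a - √b)²`, one step of `K` lowers the entropy by at least the
cross energy `∑ ν(u) K(u,v) (√w_t(v) - √w_{t+1}(u))²`. Laziness bounds the Dirichlet form of
`√w_t` by six times this cross energy, and Cauchy–Schwarz applied to
`a - b = (√a - √b)(√a + √b)` bounds the squared `L¹` gradient of `w_t` by four times the
Dirichlet form. Each summand is therefore at most `24` times an entropy drop, the sum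
telescopes, and the second claim follows by pigeonhole.
-/

open Finset Real Matrix

lemma sq_sqrt_sub_sqrt_le_mul_log_sub_tangent {a b : ℝ} (ha : 0 ≤ a) (hb : 0 < b) :
    (√a - √b) ^ 2 ≤ a * log a - b * log b - (log b + 1) * (a - b) := by
  have hsb : √b ^ 2 = b := sq_sqrt hb.le
  rcases ha.eq_or_lt with rfl | ha
  · simp only [sqrt_zero, zero_sub, neg_sq, hsb, log_zero, mul_zero]
    linarith
  have hsa : √a ^ 2 = a := sq_sqrt ha.le
  have hsa0 : 0 < √a := sqrt_pos.2 ha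
  have hlog : 1 - √b / √a ≤ (log a - log b) / 2 := by
    have := one_sub_inv_le_log_of_pos (div_pos hsa0 (sqrt_pos.2 hb))
    rwa [inv_div, log_div hsa0.ne' (sqrt_pos.2 hb).ne', log_sqrt ha.le, log_sqrt hb.le,
      ← sub_div] at this
  have hmul : a * (√b / √a) = √a * √b := by
    rw [mul_div_assoc', div_eq_iff hsa0.ne']
    linear_combination (-√b) * hsa
  nlinarith [mul_le_mul_of_nonneg_left hlog ha.le]

lemma mul_log_add_sum_sq_sqrt_sub_le {ι : Type*} [Fintype ι] {p a : ι → ℝ} {b : ℝ}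
    (hp : ∀ i, 0 ≤ p i) (hp1 : ∑ i, p i = 1) (ha : ∀ i, 0 ≤ a i)
    (hb : ∑ i, p i * a i = b) :
    b * log b + ∑ i, p i * (√(a i) - √b) ^ 2 ≤ ∑ i, p i * (a i * log (a i)) := by
  have hpa0 : ∀ i ∈ univ, 0 ≤ p i * a i := fun i _ => mul_nonneg (hp i) (ha i)
  rcases (hb ▸ sum_nonneg hpa0 : 0 ≤ b).eq_or_lt with rfl | hb0
  · have hpa : ∀ i, p i * a i = 0 := fun i => (sum_eq_zero_iff_of_nonneg hpa0).1 hb i (mem_univ i)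
    have h1 : ∀ i, p i * (√(a i) - √0) ^ 2 = 0 := fun i => by
      rw [sqrt_zero, sub_zero, sq_sqrt (ha i), hpa]
    have h2 : ∀ i, p i * (a i * log (a i)) = 0 := fun i => by rw [← mul_assoc, hpa, zero_mul]
    simp only [h1, h2, sum_const_zero, zero_mul, add_zero, le_refl]
  have hterm : ∀ i, p i * (a i * log (a i) - b * log b - (log b + 1) * (a i - b))
      = p i * (a i * log (a i)) - (log b + 1) * (p i * a i) + b * p i := fun i => by ring
  calc b * log b + ∑ i, p i * (√(a i) - √b) ^ 2
      ≤ b * log b + ∑ i, p i * (a i * log (a i) - b * log b - (log b + 1) * (a i - b)) := by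
        gcongr with i
        · exact hp i
        · exact sq_sqrt_sub_sqrt_le_mul_log_sub_tangent (ha i) hb0
    _ = ∑ i, p i * (a i * log (a i)) := by
        rw [sum_congr rfl fun i _ => hterm i, sum_add_distrib, sum_sub_distrib, ← mul_sum,
          ← mul_sum, hb, hp1]
        ring

lemma sq_abs_sub_le_sq_sqrt_sub_mul {x y : ℝ} (hx : 0 ≤ x) (hy : 0 ≤ y) :
    |x - y| ^ 2 ≤ (√x - √y) ^ 2 * (2 * (x + y)) := by
  obtain ⟨a, ha, rfl⟩ : ∃ a, 0 ≤ a ∧ x = a ^ 2 := ⟨√x, sqrt_nonneg x, (sq_sqrt hx).symm⟩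
  obtain ⟨b, hb, rfl⟩ : ∃ b, 0 ≤ b ∧ y = b ^ 2 := ⟨√y, sqrt_nonneg y, (sq_sqrt hy).symm⟩
  rw [sqrt_sq ha, sqrt_sq hb, sq_abs]
  nlinarith [pow_two_nonneg ((a - b) ^ 2)]

lemma sq_sum_mul_abs_sub_le {ι : Type*} [Fintype ι] {c : ι → ι → ℝ} {f : ι → ℝ}
    (hc : ∀ i j, 0 ≤ c i j) (hf : ∀ i, 0 ≤ f i) :
    (∑ i, ∑ j, c i j * |f i - f j|) ^ 2
      ≤ (∑ i, ∑ j, c i j * (√(f i) - √(f j)) ^ 2) * (2 * ∑ i, ∑ j, c i j * (f i + f j)) := by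
  have hpair (i j : ι) : (c i j * |f i - f j|) ^ 2
      ≤ c i j * (√(f i) - √(f j)) ^ 2 * (2 * (c i j * (f i + f j))) := calc
    _ ≤ c i j ^ 2 * ((√(f i) - √(f j)) ^ 2 * (2 * (f i + f j))) := by
      rw [mul_pow]
      exact mul_le_mul_of_nonneg_left (sq_abs_sub_le_sq_sqrt_sub_mul (hf i) (hf j)) (sq_nonneg _)
    _ = _ := by ring
  have key := sum_sq_le_sum_mul_sum_of_sq_le_mul (univ : Finset (ι × ι))
    (r := fun p => c p.1 p.2 * |f p.1 - f p.2|)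
    (f := fun p => c p.1 p.2 * (√(f p.1) - √(f p.2)) ^ 2)
    (g := fun p => 2 * (c p.1 p.2 * (f p.1 + f p.2)))
    (fun p _ => mul_nonneg (hc _ _) (sq_nonneg _))
    (fun p _ => by have := hc p.1 p.2; have := hf p.1; have := hf p.2; positivity)
    fun p _ => hpair p.1 p.2
  simpa only [Fintype.sum_prod_type, ← mul_sum] using key

lemma exists_lt_le_sqrt_of_sum_sq_le {a : ℕ → ℝ} {B : ℝ} {k : ℕ} (hk : 0 < k)
    (h : ∑ t ∈ range k, a t ^ 2 ≤ B) : ∃ t < k, a t ≤ √(B / k) := by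
  have hB : ∑ t ∈ range k, a t ^ 2 ≤ ∑ _t ∈ range k, B / k := by
    rwa [sum_const, card_range, nsmul_eq_mul, mul_div_cancel₀ _ (by positivity)]
  obtain ⟨t, ht, hle⟩ := exists_le_of_sum_le (nonempty_range_iff.2 hk.ne') hB
  exact ⟨t, mem_range.1 ht, (le_abs_self _).trans (abs_le_sqrt hle)⟩

section

variable {U : Type*} [Fintype U] {K : Matrix U U ℝ} {ν : U → ℝ}

noncomputable def entropy (ν w : U → ℝ) : ℝ := ∑ u, ν u * (w u * log (w u))

-- Summed over ordered pairs, without the customary factor `1 / 2`.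
def dirichletForm (K : Matrix U U ℝ) (ν f : U → ℝ) : ℝ :=
  ∑ u, ∑ v, ν u * K u v * (f u - f v) ^ 2

def crossEnergy (K : Matrix U U ℝ) (ν f g : U → ℝ) : ℝ :=
  ∑ u, ∑ v, ν u * K u v * (f v - g u) ^ 2

def gradL1 (K : Matrix U U ℝ) (ν f : U → ℝ) : ℝ :=
  ∑ u, ∑ v, ν u * K u v * |f u - f v|

lemma sum_mul_sq_sub_le_two_mul_crossEnergy (hK : ∀ u v, 0 ≤ K u v)
    (hlazy : ∀ u, (1 / 2 : ℝ) ≤ K u u) (hν : ∀ u, 0 ≤ ν u) (f g : U → ℝ) :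
    ∑ u, ν u * (f u - g u) ^ 2 ≤ 2 * crossEnergy K ν f g := by
  rw [crossEnergy, mul_sum]
  refine sum_le_sum fun u _ => ?_
  calc ν u * (f u - g u) ^ 2 ≤ 2 * (ν u * K u u * (f u - g u) ^ 2) := by
        nlinarith [hlazy u, mul_nonneg (hν u) (sq_nonneg (f u - g u))]
    _ ≤ 2 * ∑ v, ν u * K u v * (f v - g u) ^ 2 := by
        gcongr
        exact single_le_sum (f := fun v => ν u * K u v * (f v - g u) ^ 2)
          (fun v _ => mul_nonneg (mul_nonneg (hν u) (hK u v)) (sq_nonneg _)) (mem_univ u)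

lemma entropy_nonneg (hν : ∀ u, 0 ≤ ν u) (hν1 : ∑ u, ν u = 1) {w : U → ℝ} (hw : ∀ u, 0 ≤ w u)
    (hmass : ∑ u, ν u * w u = 1) : 0 ≤ entropy ν w := calc
  0 = ∑ u, ν u * (w u - 1) := by
    simp only [mul_sub, mul_one, sum_sub_distrib, hmass, hν1, sub_self]
  _ ≤ entropy ν w := sum_le_sum fun u _ =>
        mul_le_mul_of_nonneg_left (self_sub_one_le_mul_log (hw u)) (hν u)

section Stochastic

variable [DecidableEq U] {s : U}

noncomputable def heatDensity (K : Matrix U U ℝ) (ν : U → ℝ) (s : U) (t : ℕ) (u : U) : ℝ :=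
  (K ^ t) s u / ν u

lemma vecMul_eq_self_of_reversible (hK : K ∈ rowStochastic ℝ U)
    (hrev : ∀ u v, ν u * K u v = ν v * K v u) : ν ᵥ* K = ν := by
  ext v
  simp only [vecMul, dotProduct, hrev, ← mul_sum, sum_row_of_mem_rowStochastic hK, mul_one]

lemma entropy_mulVec_add_crossEnergy_le (hK : K ∈ rowStochastic ℝ U) (hν : ∀ u, 0 ≤ ν u)
    (hstat : ν ᵥ* K = ν) {w : U → ℝ} (hw : ∀ u, 0 ≤ w u) :
    entropy ν (K *ᵥ w) + crossEnergy K ν (fun u => √(w u)) (fun u => √((K *ᵥ w) u))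
      ≤ entropy ν w := calc
  _ = ∑ u, ν u * ((K *ᵥ w) u * log ((K *ᵥ w) u)
        + ∑ v, K u v * (√(w v) - √((K *ᵥ w) u)) ^ 2) := by
      simp only [entropy, crossEnergy, mul_add, sum_add_distrib, mul_sum, mul_assoc]
  _ ≤ ∑ u, ν u * ∑ v, K u v * (w v * log (w v)) := by
      gcongr with u
      · exact hν u
      · exact mul_log_add_sum_sq_sqrt_sub_le (hK.1 u) (sum_row_of_mem_rowStochastic hK u) hw rfl
  _ = ν ⬝ᵥ (K *ᵥ fun v => w v * log (w v)) := rfl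
  _ = entropy ν w := by rw [dotProduct_mulVec, hstat]; rfl

lemma dirichletForm_le_six_mul_crossEnergy (hK : K ∈ rowStochastic ℝ U)
    (hlazy : ∀ u, (1 / 2 : ℝ) ≤ K u u) (hν : ∀ u, 0 ≤ ν u) (f g : U → ℝ) :
    dirichletForm K ν f ≤ 6 * crossEnergy K ν f g := by
  have hpair (u v : U) : ν u * K u v * (f u - f v) ^ 2
      ≤ 2 * (ν u * (f u - g u) ^ 2 * K u v) + 2 * (ν u * K u v * (f v - g u) ^ 2) := by
    have := mul_le_mul_of_nonneg_left
      (show (f u - f v) ^ 2 ≤ 2 * (f u - g u) ^ 2 + 2 * (f v - g u) ^ 2 by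
        nlinarith [sq_nonneg (f u + f v - 2 * g u)])
      (mul_nonneg (hν u) (hK.1 u v))
    linarith
  have hsplit : dirichletForm K ν f ≤ 2 * ∑ u, ν u * (f u - g u) ^ 2 + 2 * crossEnergy K ν f g :=
    calc dirichletForm K ν f
        ≤ ∑ u, ∑ v,
            (2 * (ν u * (f u - g u) ^ 2 * K u v) + 2 * (ν u * K u v * (f v - g u) ^ 2)) :=
          sum_le_sum fun u _ => sum_le_sum fun v _ => hpair u v
      _ = _ := by
          simp only [sum_add_distrib, ← mul_sum, sum_row_of_mem_rowStochastic hK, mul_one,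
            crossEnergy]
  linarith [sum_mul_sq_sub_le_two_mul_crossEnergy hK.1 hlazy hν f g]

lemma sq_gradL1_le_four_mul_dirichletForm (hK : K ∈ rowStochastic ℝ U) (hν : ∀ u, 0 ≤ ν u)
    (hstat : ν ᵥ* K = ν) {w : U → ℝ} (hw : ∀ u, 0 ≤ w u) (hmass : ∑ u, ν u * w u = 1) :
    gradL1 K ν w ^ 2 ≤ 4 * dirichletForm K ν (fun u => √(w u)) := by
  have hout : ∑ u, ∑ v, ν u * K u v * w u = 1 := by
    simp only [mul_right_comm _ _ (w _), ← mul_sum, sum_row_of_mem_rowStochastic hK, mul_one,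
      hmass]
  have hin : ∑ u, ∑ v, ν u * K u v * w v = 1 := calc
    _ = ν ⬝ᵥ (K *ᵥ w) := by simp only [dotProduct, mulVec, mul_sum, mul_assoc]
    _ = 1 := by rw [dotProduct_mulVec, hstat]; exact hmass
  calc gradL1 K ν w ^ 2
      ≤ dirichletForm K ν (fun u => √(w u)) * (2 * ∑ u, ∑ v, ν u * K u v * (w u + w v)) :=
        sq_sum_mul_abs_sub_le (fun u v => mul_nonneg (hν u) (hK.1 u v)) hw
    _ = 4 * dirichletForm K ν (fun u => √(w u)) := by
        simp only [mul_add, sum_add_distrib, hout, hin]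
        ring

lemma heatDensity_succ (hν : ∀ u, 0 < ν u) (hrev : ∀ u v, ν u * K u v = ν v * K v u) (t : ℕ) :
    heatDensity K ν s (t + 1) = K *ᵥ heatDensity K ν s t := by
  ext u
  simp only [heatDensity, pow_succ, mul_apply, sum_div, mulVec, dotProduct]
  refine sum_congr rfl fun v _ => ?_
  have := (hν u).ne'
  have := (hν v).ne'
  field_simp
  linear_combination (-(K ^ t) s v) * hrev u v

lemma heatDensity_nonneg (hK : K ∈ rowStochastic ℝ U) (hν : ∀ u, 0 ≤ ν u) (t : ℕ) (u : U) :
    0 ≤ heatDensity K ν s t u :=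
  div_nonneg ((pow_mem hK t).1 s u) (hν u)

lemma sum_mul_heatDensity (hK : K ∈ rowStochastic ℝ U) (hν : ∀ u, ν u ≠ 0) (t : ℕ) :
    ∑ u, ν u * heatDensity K ν s t u = 1 := by
  simp only [heatDensity, mul_div_cancel₀ _ (hν _), sum_row_of_mem_rowStochastic (pow_mem hK t)]

lemma entropy_heatDensity_zero (hs : ν s ≠ 0) :
    entropy ν (heatDensity K ν s 0) = log (1 / ν s) := by
  rw [entropy, sum_eq_single s]
  · simp only [heatDensity, pow_zero, one_apply_eq]
    field_simp
  · intro u _ hus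
    simp [heatDensity, one_apply_ne hus.symm]
  · simp

theorem sq_gradL1_heatDensity_le (hK : K ∈ rowStochastic ℝ U) (hlazy : ∀ u, (1 / 2 : ℝ) ≤ K u u)
    (hν : ∀ u, 0 < ν u) (hrev : ∀ u v, ν u * K u v = ν v * K v u) (t : ℕ) :
    gradL1 K ν (heatDensity K ν s t) ^ 2
      ≤ 24 * (entropy ν (heatDensity K ν s t) - entropy ν (heatDensity K ν s (t + 1))) := by
  have hν0 : ∀ u, 0 ≤ ν u := fun u => (hν u).le
  have hstat := vecMul_eq_self_of_reversible hK hrev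
  have hw := heatDensity_nonneg (s := s) hK hν0 t
  rw [heatDensity_succ hν hrev]
  linarith [sq_gradL1_le_four_mul_dirichletForm hK hν0 hstat hw
      (sum_mul_heatDensity hK (fun u => (hν u).ne') t),
    dirichletForm_le_six_mul_crossEnergy hK hlazy hν0 (fun u => √(heatDensity K ν s t u))
      (fun u => √((K *ᵥ heatDensity K ν s t) u)),
    entropy_mulVec_add_crossEnergy_le hK hν0 hstat hw]

theorem sum_sq_gradL1_heatDensity_le (hK : K ∈ rowStochastic ℝ U)
    (hlazy : ∀ u, (1 / 2 : ℝ) ≤ K u u) (hν : ∀ u, 0 < ν u) (hν1 : ∑ u, ν u = 1)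
    (hrev : ∀ u v, ν u * K u v = ν v * K v u) (k : ℕ) :
    ∑ t ∈ range k, gradL1 K ν (heatDensity K ν s t) ^ 2 ≤ 24 * log (1 / ν s) := calc
  _ ≤ ∑ t ∈ range k,
        24 * (entropy ν (heatDensity K ν s t) - entropy ν (heatDensity K ν s (t + 1))) :=
      sum_le_sum fun t _ => sq_gradL1_heatDensity_le hK hlazy hν hrev t
  _ = 24 * (entropy ν (heatDensity K ν s 0) - entropy ν (heatDensity K ν s k)) := by
      rw [← mul_sum, sum_range_sub']
  _ ≤ 24 * log (1 / ν s) := by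
      have hk := entropy_nonneg (fun u => (hν u).le) hν1
        (heatDensity_nonneg hK (fun u => (hν u).le) k)
        (sum_mul_heatDensity (s := s) hK (fun u => (hν u).ne') k)
      rw [entropy_heatDensity_zero (hν s).ne']
      linarith

end Stochastic

end

/-- Heat-kernel `L¹`-gradient averaging: there is a universal `C > 0` such that, for every lazy
reversible Markov kernel `K` on a finite state space with positive stationary distribution `ν`,
the heat-kernel densities `w_t(u) = K^t(s,u)/ν(u)` satisfy
`Σ_{t<k} (Σ_{u,v} ν(u)K(u,v)|w_t(u)−w_t(v)|)² ≤ C log(1/ν(s))`, and consequently some `t < k`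
has `Σ_{u,v} ν(u)K(u,v)|w_t(u)−w_t(v)| ≤ C √(log(1/ν(s))/k)`. -/
theorem stmt1 :
    ∃ C > (0 : ℝ),
      ∀ (U : Type) [Fintype U] [DecidableEq U],
      ∀ (K : Matrix U U ℝ) (ν : U → ℝ) (s : U) (k : ℕ),
        (∀ u v, 0 ≤ K u v) → (∀ u, ∑ v, K u v = 1) → (∀ u, (1 / 2 : ℝ) ≤ K u u) →
        (∀ u, 0 < ν u) → (∑ u, ν u = 1) →
        (∀ u v, ν u * K u v = ν v * K v u) →
        1 ≤ k →
        (∑ t ∈ Finset.range k,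
            (∑ u, ∑ v, ν u * K u v * |(K ^ t) s u / ν u - (K ^ t) s v / ν v|) ^ 2)
            ≤ C * Real.log (1 / ν s) ∧
        ∃ t < k,
          (∑ u, ∑ v, ν u * K u v * |(K ^ t) s u / ν u - (K ^ t) s v / ν v|)
            ≤ C * Real.sqrt (Real.log (1 / ν s) / k) := by
  refine ⟨24, by norm_num, fun U _ _ K ν s k hK0 hKrow hlazy hν hν1 hrev hk => ?_⟩
  have hK : K ∈ rowStochastic ℝ U := mem_rowStochastic_iff_sum.2 ⟨hK0, hKrow⟩
  have hsum := sum_sq_gradL1_heatDensity_le (s := s) hK hlazy hν hν1 hrev k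
  have hlog : 0 ≤ log (1 / ν s) := log_nonneg <| one_le_one_div (hν s) <|
    hν1 ▸ single_le_sum (fun u _ => (hν u).le) (mem_univ s)
  refine ⟨hsum, ?_⟩
  obtain ⟨t, htk, ht⟩ := exists_lt_le_sqrt_of_sum_sq_le hk <|
    hsum.trans (mul_le_mul_of_nonneg_right (by norm_num : (24 : ℝ) ≤ 24 ^ 2) hlog)
  refine ⟨t, htk, ht.trans_eq ?_⟩
  rw [mul_div_assoc, sqrt_mul (by norm_num), sqrt_sq (by norm_num)]
end

section
/- Let φ(r)=r·log r for r>0 and φ(0)=0. Then for all reals a,b≥0 with a+b>0, (φ(a)+φ(b))/2 − φ((a+b)/2) ≥ (1/4)·(a−b)²/(a+b). -/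
/-!
Put `m = (a + b) / 2` and `s = (a - b) / (a + b)`, so that `a = m (1 + s)` and `b = m (1 - s)`.
Since `φ (x y) = y φ x + x φ y`, the left side is `m (φ (1 + s) + φ (1 - s)) / 2` and the right
side is `m s² / 2`, so everything reduces to `s² ≤ φ (1 + s) + φ (1 - s)` for `|s| ≤ 1`. This
one-variable inequality holds with equality at `s = 0`, and the derivative of the difference,
`log (1 + s) - log (1 - s) - 2 s`, is nonnegative for `0 ≤ s < 1` by the power series of
`artanh`, all of whose terms are nonnegative.
-/

/-- `φ(r) = r·log r`, with `φ(0) = 0` (automatic since `Real.log 0 = 0`). -/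
noncomputable def phiEnt (r : ℝ) : ℝ := r * Real.log r

open Real Set

theorem phiEnt_mul (x y : ℝ) : phiEnt (x * y) = y * phiEnt x + x * phiEnt y := by
  have := negMulLog_mul x y
  simp only [negMulLog, phiEnt] at this ⊢
  linarith

theorem hasDerivAt_phiEnt {x : ℝ} (hx : x ≠ 0) : HasDerivAt phiEnt (log x + 1) x :=
  hasDerivAt_mul_log hx

@[fun_prop]
theorem continuous_phiEnt : Continuous phiEnt := continuous_mul_log

theorem two_mul_le_log_one_add_sub_log_one_sub {x : ℝ} (hx₀ : 0 ≤ x) (hx₁ : x < 1) :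
    2 * x ≤ log (1 + x) - log (1 - x) := by
  have hsum := hasSum_log_sub_log_of_abs_lt_one (abs_lt.2 ⟨by linarith, hx₁⟩)
  simpa using le_hasSum hsum 0 fun k _ => by positivity

theorem sq_le_phiEnt_one_add_add_phiEnt_one_sub {s : ℝ} (hs : |s| ≤ 1) :
    s ^ 2 ≤ phiEnt (1 + s) + phiEnt (1 - s) := by
  wlog hs₀ : 0 ≤ s generalizing s
  · have := this (s := -s) (by rwa [abs_neg]) (by linarith)
    rwa [neg_sq, ← sub_eq_add_neg, sub_neg_eq_add, add_comm] at this
  set G : ℝ → ℝ := fun t => phiEnt (1 + t) + phiEnt (1 - t) - t ^ 2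
  have hderiv : ∀ t ∈ Ioo (0 : ℝ) 1,
      HasDerivAt G (log (1 + t) - log (1 - t) - 2 * t) t := by
    intro t ⟨ht₀, ht₁⟩
    have hplus := (hasDerivAt_phiEnt (x := 1 + t) (by linarith)).comp t
      ((hasDerivAt_id t).const_add 1)
    have hminus := (hasDerivAt_phiEnt (x := 1 - t) (by linarith)).comp t
      ((hasDerivAt_id t).const_sub 1)
    refine ((hplus.add hminus).sub (hasDerivAt_pow 2 t)).congr_deriv ?_
    push_cast
    ring
  have hmono : MonotoneOn G (Icc 0 1) := by
    refine monotoneOn_of_deriv_nonneg (convex_Icc 0 1) (by unfold G; fun_prop) ?_ ?_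
    · rw [interior_Icc]
      exact fun t ht => (hderiv t ht).differentiableAt.differentiableWithinAt
    · rw [interior_Icc]
      intro t ht
      rw [(hderiv t ht).deriv]
      linarith [two_mul_le_log_one_add_sub_log_one_sub ht.1.le ht.2]
  simpa [G, phiEnt] using hmono ⟨le_rfl, zero_le_one⟩ ⟨hs₀, (le_abs_self s).trans hs⟩ hs₀

theorem stmt2 (a b : ℝ) (ha : 0 ≤ a) (hb : 0 ≤ b) (hab : 0 < a + b) :
    (phiEnt a + phiEnt b) / 2 - phiEnt ((a + b) / 2) ≥ (1 / 4) * (a - b) ^ 2 / (a + b) := by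
  set m := (a + b) / 2 with hm
  set s := (a - b) / (a + b) with hs
  have ha_eq : a = m * (1 + s) := by rw [hm, hs]; field_simp; ring
  have hb_eq : b = m * (1 - s) := by rw [hm, hs]; field_simp; ring
  have hs_abs : |s| ≤ 1 := by
    rw [hs, abs_le, le_div_iff₀ hab, div_le_iff₀ hab]
    constructor <;> linarith
  calc (1 / 4) * (a - b) ^ 2 / (a + b) = m * s ^ 2 / 2 := by rw [hm, hs]; field_simp; ring
    _ ≤ m * (phiEnt (1 + s) + phiEnt (1 - s)) / 2 := by
      gcongr
      exact sq_le_phiEnt_one_add_add_phiEnt_one_sub hs_abs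
    _ = (phiEnt a + phiEnt b) / 2 - phiEnt m := by
      conv_rhs => rw [ha_eq, hb_eq, phiEnt_mul, phiEnt_mul]
      ring
end

section
/- There is a universal constant c>0 such that the following holds. Let K be a Markov kernel on a finite state space U with K(u,u)≥1/2 for every u∈U, reversible with respect to a positive stationary probability distribution ν. Let f:U→[0,∞) satisfy Σ_u ν(u)f(u)=1, and let (Kf)(u)=Σ_v K(u,v)f(v). Then Ent_ν(f) − Ent_ν(Kf) ≥ c·Σ_{u,v} ν(u)K(u,v)·(f(u)−f(v))²/(f(u)+f(v)), where each summand with f(u)=f(v)=0 is interpreted as 0. -/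
/-!
Stationarity of `ν` writes `Ent_ν(f) - Ent_ν(Kf)` as `Σ_u ν(u) G_u`, where `G_u` is the Jensen gap
`Σ_v p(v) φ(f v) - φ(m)` of `φ(x) = x log x` for the row `p = K(u, ·)` and its mean
`m = (Kf)(u)`. The pointwise bound `x log (x / m) - x + m ≥ (√x - √m)²` gives
`G_u ≥ Σ_v p(v) (√(f v) - √m)²`; laziness, `p(u) ≥ 1/2`, lets the centre `√m` be replaced by
`√(f u)` at the cost of a factor `6`, and `(a - b)² / (a + b) ≤ 2 (√a - √b)²` gives `c = 1/12`.
-/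

noncomputable section

/-- Entropy with respect to `ν`: `Ent_ν(g) = Σ_u ν(u) g(u) log g(u)` (note `0·log 0 = 0`
holds automatically since `Real.log 0 = 0`). -/
def entNu {U : Type} [Fintype U] (ν g : U → ℝ) : ℝ := ∑ u, ν u * (g u * Real.log (g u))

open Real Finset

lemma sq_sub_div_add_le_two_mul_sq_sqrt_sub {x y : ℝ} (hx : 0 ≤ x) (hy : 0 ≤ y) :
    (x - y) ^ 2 / (x + y) ≤ 2 * (√x - √y) ^ 2 := by
  refine div_le_of_le_mul₀ (by positivity) (by positivity) ?_
  have key : (√x ^ 2 - √y ^ 2) ^ 2 ≤ 2 * (√x - √y) ^ 2 * (√x ^ 2 + √y ^ 2) := by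
    -- the difference of the two sides is `(√x - √y) ^ 4`
    nlinarith [sq_nonneg ((√x - √y) ^ 2)]
  rwa [sq_sqrt hx, sq_sqrt hy] at key

lemma sq_sqrt_sub_sqrt_le {x y : ℝ} (hx : 0 ≤ x) (hy : 0 < y) :
    (√x - √y) ^ 2 ≤ x * log x - x * log y - x + y := by
  rcases hx.eq_or_lt with rfl | hx
  · simp [sq_sqrt hy.le]
  have hlog : 1 - √y / √x ≤ (log x - log y) / 2 := by
    have := one_sub_inv_le_log_of_pos (div_pos (sqrt_pos.2 hx) (sqrt_pos.2 hy))
    rwa [inv_div, log_div (sqrt_pos.2 hx).ne' (sqrt_pos.2 hy).ne', log_sqrt hx.le,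
      log_sqrt hy.le, ← sub_div] at this
  have hmul : x * (√y / √x) = √x * √y := by
    rw [← mul_div_assoc, mul_div_right_comm, div_sqrt]
  nlinarith [mul_le_mul_of_nonneg_left hlog hx.le, sq_sqrt hx.le, sq_sqrt hy.le]

section Finite

variable {ι : Type*} [Fintype ι]

lemma sum_mul_sq_sub_self_le_six_mul (p x : ι → ℝ) (u : ι) (c : ℝ) (hp : ∀ v, 0 ≤ p v)
    (hsum : ∑ v, p v = 1) (hpu : 1 / 2 ≤ p u) :
    ∑ v, p v * (x v - x u) ^ 2 ≤ 6 * ∑ v, p v * (x v - c) ^ 2 := by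
  set V := ∑ v, p v * (x v - c) ^ 2
  have hsplit : ∑ v, p v * (x v - x u) ^ 2 ≤ 2 * V + 2 * (x u - c) ^ 2 := calc
    _ ≤ ∑ v, (2 * (p v * (x v - c) ^ 2) + 2 * (x u - c) ^ 2 * p v) := by
      gcongr with v
      nlinarith [hp v, sq_nonneg (x v + x u - 2 * c)]
    _ = 2 * V + 2 * (x u - c) ^ 2 := by
      rw [sum_add_distrib, ← mul_sum, ← mul_sum, hsum, mul_one]
  have hpoint : p u * (x u - c) ^ 2 ≤ V :=
    single_le_sum (f := fun v => p v * (x v - c) ^ 2)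
      (fun v _ => mul_nonneg (hp v) (sq_nonneg _)) (mem_univ u)
  nlinarith [sq_nonneg (x u - c)]

lemma sum_mul_sq_sqrt_sub_sqrt_mean_le (p f : ι → ℝ) (hp : ∀ v, 0 ≤ p v)
    (hsum : ∑ v, p v = 1) (hf : ∀ v, 0 ≤ f v) :
    ∑ v, p v * (√(f v) - √(∑ w, p w * f w)) ^ 2 ≤
      ∑ v, p v * (f v * log (f v)) - (∑ v, p v * f v) * log (∑ v, p v * f v) := by
  set m := ∑ v, p v * f v
  have hpf : ∀ v, 0 ≤ p v * f v := fun v => mul_nonneg (hp v) (hf v)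
  rcases (sum_nonneg fun v _ => hpf v : 0 ≤ m).eq_or_lt with hm | hm
  · have hzero : ∀ v, p v * f v = 0 := fun v =>
      (sum_eq_zero_iff_of_nonneg fun v _ => hpf v).1 hm.symm v (mem_univ v)
    have hm0 : m = 0 := hm.symm
    simp only [hm0, sqrt_zero, sub_zero, sq_sqrt (hf _), ← mul_assoc, hzero, zero_mul,
      sum_const_zero, le_refl]
  calc ∑ v, p v * (√(f v) - √m) ^ 2
      ≤ ∑ v, p v * (f v * log (f v) - f v * log m - f v + m) := by
        gcongr with v
        exacts [hp v, sq_sqrt_sub_sqrt_le (hf v) hm]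
    _ = ∑ v, p v * (f v * log (f v)) - m * log m := by
        simp only [mul_add, mul_sub, sum_add_distrib, sum_sub_distrib, ← mul_assoc, ← sum_mul,
          hsum]
        ring

lemma one_div_twelve_mul_sum_le_of_lazy (p f : ι → ℝ) (u : ι) (hp : ∀ v, 0 ≤ p v)
    (hsum : ∑ v, p v = 1) (hpu : 1 / 2 ≤ p u) (hf : ∀ v, 0 ≤ f v) :
    1 / 12 * ∑ v, p v * ((f u - f v) ^ 2 / (f u + f v)) ≤
      ∑ v, p v * (f v * log (f v)) - (∑ v, p v * f v) * log (∑ v, p v * f v) := by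
  have hcmp : ∑ v, p v * ((f u - f v) ^ 2 / (f u + f v)) ≤
      2 * ∑ v, p v * (√(f v) - √(f u)) ^ 2 := by
    rw [mul_sum]
    refine sum_le_sum fun v _ => ?_
    calc p v * ((f u - f v) ^ 2 / (f u + f v))
        ≤ p v * (2 * (√(f u) - √(f v)) ^ 2) :=
          mul_le_mul_of_nonneg_left (sq_sub_div_add_le_two_mul_sq_sqrt_sub (hf u) (hf v)) (hp v)
      _ = 2 * (p v * (√(f v) - √(f u)) ^ 2) := by ring
  have := sum_mul_sq_sub_self_le_six_mul p (fun v => √(f v)) u (√(∑ w, p w * f w)) hp hsum hpu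
  linarith [sum_mul_sq_sqrt_sub_sqrt_mean_le p f hp hsum hf]

lemma sum_mul_sum_eq_of_stationary (K : ι → ι → ℝ) (ν : ι → ℝ)
    (hstat : ∀ v, ∑ u, ν u * K u v = ν v) (g : ι → ℝ) :
    ∑ u, ν u * ∑ v, K u v * g v = ∑ v, ν v * g v := by
  simp_rw [mul_sum, ← mul_assoc]
  rw [sum_comm]
  simp_rw [← sum_mul, hstat]

lemma sum_mul_eq_of_reversible (K : ι → ι → ℝ) (ν : ι → ℝ) (hK : ∀ u, ∑ v, K u v = 1)
    (hrev : ∀ u v, ν u * K u v = ν v * K v u) (v : ι) : ∑ u, ν u * K u v = ν v := by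
  simp_rw [hrev _ v, ← mul_sum, hK, mul_one]

end Finite

/-- One-step entropy decay for a lazy reversible Markov kernel: there is a universal `c > 0`
with `Ent_ν(f) − Ent_ν(Kf) ≥ c Σ_{u,v} ν(u)K(u,v)(f(u)−f(v))²/(f(u)+f(v))`, where summands
with `f(u) = f(v) = 0` are `0` (automatic since `0/0 = 0`). -/
theorem stmt3 :
    ∃ c > (0 : ℝ),
      ∀ (U : Type) [Fintype U],
      ∀ (K : U → U → ℝ) (ν : U → ℝ) (f : U → ℝ),
        (∀ u v, 0 ≤ K u v) → (∀ u, ∑ v, K u v = 1) → (∀ u, (1 / 2 : ℝ) ≤ K u u) →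
        (∀ u, 0 < ν u) → (∑ u, ν u = 1) →
        (∀ u v, ν u * K u v = ν v * K v u) →
        (∀ u, 0 ≤ f u) → (∑ u, ν u * f u = 1) →
        c * ∑ u, ∑ v, ν u * K u v * ((f u - f v) ^ 2 / (f u + f v))
          ≤ entNu ν f - entNu ν (fun u => ∑ v, K u v * f v) := by
  refine ⟨1 / 12, by norm_num, fun U _ K ν f hK hK1 hlazy hν _ hrev hf _ => ?_⟩
  have hent : entNu ν f = ∑ u, ν u * ∑ v, K u v * (f v * log (f v)) :=
    (sum_mul_sum_eq_of_stationary K ν (sum_mul_eq_of_reversible K ν hK1 hrev) _).symm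
  calc 1 / 12 * ∑ u, ∑ v, ν u * K u v * ((f u - f v) ^ 2 / (f u + f v))
      = ∑ u, ν u * (1 / 12 * ∑ v, K u v * ((f u - f v) ^ 2 / (f u + f v))) := by
        simp_rw [mul_sum, mul_assoc, mul_left_comm]
    _ ≤ ∑ u, ν u * (∑ v, K u v * (f v * log (f v)) -
          (∑ v, K u v * f v) * log (∑ v, K u v * f v)) := by
        gcongr with u
        exacts [(hν u).le, one_div_twelve_mul_sum_le_of_lazy (K u) f u (hK u) (hK1 u) (hlazy u) hf]
    _ = entNu ν f - entNu ν (fun u => ∑ v, K u v * f v) := by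
        rw [hent, entNu, ← sum_sub_distrib]
        simp_rw [mul_sub]

end
end

section
/- Let Q≥2 be an integer, let X and Y be finite sets, and let p be a subdistribution on X×[Q]. Let K^Π(x,y) (x∈X, y∈Y, Π a permutation of [Q]) be nonnegative numbers with Σ_{y∈Y}Σ_Π K^Π(x,y)=1 for every x∈X, and let K̂ be the Markov kernel from X×[Q] to Y×[Q] defined by K̂((x,b),(y,c)) = Σ_{Π:Π(b)=c} K^Π(x,y). Then: (i) A_Y(pK̂) ≥ A_X(p), where (pK̂)(y,c)=Σ_{(x,b)}p(x,b)K̂((x,b),(y,c)); and (ii) if p=p₁+p₂ pointwise for subdistributions p₁,p₂ on X×[Q], then A_X(p) ≥ A_X(p₁)+A_X(p₂). -/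
noncomputable section

/-- Ambiguity functional of a subdistribution `p` on `X × [Q]`:
`A_X(p) = Σ_x (Σ_b p(x,b) − max_b p(x,b))`. -/
def ambig {X : Type} [Fintype X] {Q : ℕ} (p : X × Fin Q → ℝ) : ℝ :=
  ∑ x : X, ((∑ b : Fin Q, p (x, b)) - ⨆ b : Fin Q, p (x, b))

/-- Push-forward of `p` through the label-lifted Markov kernel
`K̂((x,b),(y,c)) = Σ_{Π : Π(b)=c} K^Π(x,y)`. -/
def pushLift {X Y : Type} [Fintype X] {Q : ℕ}
    (K : Equiv.Perm (Fin Q) → X → Y → ℝ) (p : X × Fin Q → ℝ) : Y × Fin Q → ℝ :=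
  fun q => ∑ x : X, ∑ b : Fin Q,
    p (x, b) * ∑ g : Equiv.Perm (Fin Q), if g b = q.2 then K g x q.1 else 0

/-!
Mass is conserved by the kernel, while the row maxima can only shrink in total:
`pK̂(y,c) = Σ_{x,Π} K^Π(x,y) p(x, Π⁻¹ c)` is at most `Σ_{x,Π} K^Π(x,y) max_b p(x,b)`, and
summing over `y` gives `Σ_x max_b p(x,b)`. Superadditivity is subadditivity of the maximum.
-/

section Ambiguity

variable {X Y : Type} [Fintype X] [Fintype Y] {Q : ℕ}

theorem ambig_eq_sum_sub_sum_iSup (p : X × Fin Q → ℝ) :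
    ambig p = ∑ z, p z - ∑ x, ⨆ b, p (x, b) := by
  rw [ambig, Finset.sum_sub_distrib, Fintype.sum_prod_type]

theorem ambig_add_le_ambig_add [NeZero Q] (p₁ p₂ : X × Fin Q → ℝ) :
    ambig p₁ + ambig p₂ ≤ ambig (p₁ + p₂) := by
  simp only [ambig_eq_sum_sub_sum_iSup, Pi.add_apply, Finset.sum_add_distrib]
  have hmax := Finset.sum_le_sum fun x (_ : x ∈ Finset.univ) =>
    ciSup_add_le_ciSup_add_ciSup (Set.finite_range fun b => p₁ (x, b)).bddAbove
      (Set.finite_range fun b => p₂ (x, b)).bddAbove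
  rw [Finset.sum_add_distrib] at hmax
  linarith

omit [Fintype Y] in
theorem pushLift_apply (K : Equiv.Perm (Fin Q) → X → Y → ℝ) (p : X × Fin Q → ℝ)
    (y : Y) (c : Fin Q) :
    pushLift K p (y, c) = ∑ x, ∑ g, K g x y * p (x, g.symm c) := by
  refine Finset.sum_congr rfl fun x _ => ?_
  simp only [Finset.mul_sum, mul_ite, mul_zero]
  rw [Finset.sum_comm]
  refine Finset.sum_congr rfl fun g _ => ?_
  simp only [← Equiv.eq_symm_apply, Finset.sum_ite_eq', Finset.mem_univ, if_true]
  exact mul_comm _ _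

theorem sum_pushLift (K : Equiv.Perm (Fin Q) → X → Y → ℝ)
    (hK1 : ∀ x : X, ∑ y : Y, ∑ g : Equiv.Perm (Fin Q), K g x y = 1) (p : X × Fin Q → ℝ) :
    ∑ z, pushLift K p z = ∑ z, p z := by
  have hrow (y : Y) (x : X) (g : Equiv.Perm (Fin Q)) :
      ∑ c, K g x y * p (x, g.symm c) = K g x y * ∑ b, p (x, b) := by
    rw [← Finset.mul_sum, Equiv.sum_comp g.symm fun b => p (x, b)]
  calc ∑ z, pushLift K p z
      = ∑ x, (∑ y, ∑ g, K g x y) * ∑ b, p (x, b) := by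
        simp only [Fintype.sum_prod_type, pushLift_apply]
        rw [Finset.sum_comm]
        simp only [Finset.sum_comm (γ := Fin Q), hrow, Finset.sum_mul]
        exact Finset.sum_comm
    _ = ∑ z, p z := by simp [hK1, Fintype.sum_prod_type]

theorem sum_iSup_pushLift_le [NeZero Q] (K : Equiv.Perm (Fin Q) → X → Y → ℝ)
    (hK0 : ∀ g x y, 0 ≤ K g x y)
    (hK1 : ∀ x : X, ∑ y : Y, ∑ g : Equiv.Perm (Fin Q), K g x y = 1) (p : X × Fin Q → ℝ) :
    ∑ y, ⨆ c, pushLift K p (y, c) ≤ ∑ x, ⨆ b, p (x, b) := by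
  have hrow (y : Y) : ⨆ c, pushLift K p (y, c) ≤ ∑ x, ∑ g, K g x y * ⨆ b, p (x, b) :=
    ciSup_le fun c => by
      rw [pushLift_apply]
      gcongr with x _ g _
      · exact hK0 g x y
      · exact le_ciSup (Set.finite_range fun b => p (x, b)).bddAbove _
  calc ∑ y, ⨆ c, pushLift K p (y, c)
      ≤ ∑ y, ∑ x, ∑ g, K g x y * ⨆ b, p (x, b) := Finset.sum_le_sum fun y _ => hrow y
    _ = ∑ x, (∑ y, ∑ g, K g x y) * ⨆ b, p (x, b) := by
        rw [Finset.sum_comm]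
        simp only [Finset.sum_mul]
    _ = ∑ x, ⨆ b, p (x, b) := by simp [hK1]

theorem ambig_le_ambig_pushLift [NeZero Q] (K : Equiv.Perm (Fin Q) → X → Y → ℝ)
    (hK0 : ∀ g x y, 0 ≤ K g x y)
    (hK1 : ∀ x : X, ∑ y : Y, ∑ g : Equiv.Perm (Fin Q), K g x y = 1) (p : X × Fin Q → ℝ) :
    ambig p ≤ ambig (pushLift K p) := by
  rw [ambig_eq_sum_sub_sum_iSup, ambig_eq_sum_sub_sum_iSup, sum_pushLift K hK1]
  linarith [sum_iSup_pushLift_le K hK0 hK1 p]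

end Ambiguity

theorem stmt4_general (Q : ℕ) (hQ : 2 ≤ Q) (X Y : Type) [Fintype X] [Fintype Y]
    (p : X × Fin Q → ℝ)
    (K : Equiv.Perm (Fin Q) → X → Y → ℝ)
    (hK0 : ∀ g x y, 0 ≤ K g x y)
    (hK1 : ∀ x : X, ∑ y : Y, ∑ g : Equiv.Perm (Fin Q), K g x y = 1) :
    ambig p ≤ ambig (pushLift K p) ∧
      ∀ p₁ p₂ : X × Fin Q → ℝ,
        (∀ z, 0 ≤ p₁ z) → (∑ z, p₁ z ≤ 1) →
        (∀ z, 0 ≤ p₂ z) → (∑ z, p₂ z ≤ 1) →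
        (∀ z, p z = p₁ z + p₂ z) →
        ambig p₁ + ambig p₂ ≤ ambig p := by
  have : NeZero Q := ⟨by omega⟩
  refine ⟨ambig_le_ambig_pushLift K hK0 hK1 p, fun p₁ p₂ _ _ _ _ hsum => ?_⟩
  rw [show p = p₁ + p₂ from funext hsum]
  exact ambig_add_le_ambig_add p₁ p₂

/-- Ambiguity monotonicity under permutation kernels, and superadditivity of ambiguity. -/
theorem stmt4 (Q : ℕ) (hQ : 2 ≤ Q) (X Y : Type) [Fintype X] [Fintype Y]
    (p : X × Fin Q → ℝ) (hp0 : ∀ z, 0 ≤ p z) (hp1 : ∑ z, p z ≤ 1)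
    (K : Equiv.Perm (Fin Q) → X → Y → ℝ)
    (hK0 : ∀ g x y, 0 ≤ K g x y)
    (hK1 : ∀ x : X, ∑ y : Y, ∑ g : Equiv.Perm (Fin Q), K g x y = 1) :
    ambig p ≤ ambig (pushLift K p) ∧
      ∀ p₁ p₂ : X × Fin Q → ℝ,
        (∀ z, 0 ≤ p₁ z) → (∑ z, p₁ z ≤ 1) →
        (∀ z, 0 ≤ p₂ z) → (∑ z, p₂ z ≤ 1) →
        (∀ z, p z = p₁ z + p₂ z) →
        ambig p₁ + ambig p₂ ≤ ambig p :=
  stmt4_general Q hQ X Y p K hK0 hK1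
end
end

section
/- For every integer Q≥2 there exist constants C_Q,c_Q>0 such that the following holds. Let (K^Π) be a reversible Q-trace family on a finite set R with positive probability measure π_R, let θ>0, ω>0, let k be a positive integer, and let B⊆R satisfy π_R(B)=δ>0. Suppose that for every s∈B there exists a label a_s∈[Q] with Amb_t(s,a_s) ≤ ω for every 0≤t≤k. If k ≥ C_Q·θ^{−2}·log(2|R|/δ) and ω ≤ c_Q·θ, then there exist a nonempty S⊆R and ℓ:S→[Q] with β_R(S,ℓ) < θ. -/
open scoped Classical

noncomputable section

/-- Label lift of a `Q`-trace family: `K̂((u,b),(v,c)) = Σ_{Π : Π(b)=c} K^Π(u,v)`,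
as a matrix on `R × [Q]`. -/
def liftK {Q : ℕ} {R : Type} [Fintype R] [DecidableEq R]
    (K : Equiv.Perm (Fin Q) → R → R → ℝ) : Matrix (R × Fin Q) (R × Fin Q) ℝ :=
  Matrix.of fun p q => ∑ g : Equiv.Perm (Fin Q), if g p.2 = q.2 then K g p.1 q.1 else 0

/-- Ambiguity after `t` steps of the label lift started from `(s,a)`:
`Amb_t(s,a) = Σ_v (u_t(v) − max_b p_t^{s,a}(v,b))` where `p_t^{s,a}(v,b) = (K̂^t)((s,a),(v,b))`
and `u_t(v) = Σ_b p_t^{s,a}(v,b)`. -/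
def AmbT {Q : ℕ} {R : Type} [Fintype R] [DecidableEq R]
    (K : Equiv.Perm (Fin Q) → R → R → ℝ) (s : R) (a : Fin Q) (t : ℕ) : ℝ :=
  ∑ v : R, ((∑ b : Fin Q, (liftK K ^ t) (s, a) (v, b)) -
    ⨆ b : Fin Q, (liftK K ^ t) (s, a) (v, b))

/-- Failure probability of a partial labeling `ℓ` on `S` under one trace step:
`β_R(S,ℓ) = (1/π_R(S)) Σ_{u∈S} π_R(u) [Σ_{v∉S} Σ_Π K^Π(u,v)
  + Σ_{v∈S} Σ_Π K^Π(u,v) 1[ℓ(v) ≠ Π(ℓ(u))]]`. -/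
def betaTr {Q : ℕ} {R : Type} [Fintype R] [DecidableEq R]
    (piR : R → ℝ) (K : Equiv.Perm (Fin Q) → R → R → ℝ) (S : Finset R) (ℓ : R → Fin Q) : ℝ :=
  (∑ u ∈ S, piR u)⁻¹ *
    ∑ u ∈ S, piR u *
      ((∑ v ∈ Sᶜ, ∑ g : Equiv.Perm (Fin Q), K g u v) +
        ∑ v ∈ S, ∑ g : Equiv.Perm (Fin Q), if ℓ v ≠ g (ℓ u) then K g u v else 0)


lemma aux_mul_log (x : ℝ) (hx : 0 ≤ x) : x - 1 ≤ x * Real.log x := by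
  rcases eq_or_lt_of_le hx with h0 | hx'
  · simp [← h0]
  · have h := Real.log_le_sub_one_of_pos (inv_pos.mpr hx')
    rw [Real.log_inv] at h
    have := mul_le_mul_of_nonneg_left h (le_of_lt hx')
    have hinv : x * x⁻¹ = 1 := mul_inv_cancel₀ hx'.ne'
    nlinarith

lemma aux_kl (a b : ℝ) (ha : 0 ≤ a) (hb : 0 < b) :
    (Real.sqrt a - Real.sqrt b) ^ 2 ≤ a * Real.log a - a * Real.log b - a + b := by
  rcases eq_or_lt_of_le ha with h0 | ha'
  · rw [← h0]
    rw [Real.sqrt_zero]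
    have hsb : Real.sqrt b ^ 2 = b := Real.sq_sqrt hb.le
    simp [hsb]
  · have hsa : 0 < Real.sqrt a := Real.sqrt_pos.mpr ha'
    have hsb : 0 < Real.sqrt b := Real.sqrt_pos.mpr hb
    have h1 : Real.log (Real.sqrt b / Real.sqrt a) ≤ Real.sqrt b / Real.sqrt a - 1 :=
      Real.log_le_sub_one_of_pos (by positivity)
    rw [Real.log_div hsb.ne' hsa.ne', Real.log_sqrt hb.le, Real.log_sqrt ha'.le] at h1
    have h2 : Real.sqrt a * Real.sqrt a = a := Real.mul_self_sqrt ha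
    have h3 : Real.sqrt b * Real.sqrt b = b := Real.mul_self_sqrt hb.le
    have h5 := mul_le_mul_of_nonneg_left h1 (by positivity : (0:ℝ) ≤ 2 * a)
    have h6 : 2 * a * (Real.sqrt b / Real.sqrt a - 1)
        = 2 * Real.sqrt a * Real.sqrt b - 2 * a := by
      have : a * (Real.sqrt b / Real.sqrt a) = Real.sqrt a * Real.sqrt b := by
        rw [mul_div_assoc', div_eq_iff hsa.ne']; linear_combination (-Real.sqrt b) * h2
      nlinarith [this]
    nlinarith [h5, h6]

lemma aux_sup_exists {Q : ℕ} (hQ : 0 < Q) (f : Fin Q → ℝ) :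
    ∃ b0, (⨆ b, f b) = f b0 ∧ ∀ b, f b ≤ f b0 := by
  have : Nonempty (Fin Q) := ⟨⟨0, hQ⟩⟩
  obtain ⟨b0, hb0⟩ := Finite.exists_max f
  refine ⟨b0, le_antisymm (ciSup_le hb0) (le_ciSup (Finite.bddAbove_range f) b0), hb0⟩

/-- One step of a lazy reversible chain decreases relative entropy by at least
(L¹-gradient)²/6. -/
lemma aux_entropy_step {R : Type} [Fintype R] (pi : R → ℝ) (Kb : R → R → ℝ) (u u' : R → ℝ)
    (hpi : ∀ v, 0 < pi v) (hKb0 : ∀ v w, 0 ≤ Kb v w)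
    (hrow : ∀ v, ∑ w, Kb v w = 1)
    (hrev : ∀ v w, pi v * Kb v w = pi w * Kb w v)
    (hlazy : ∀ v, 1/2 ≤ Kb v v)
    (hu0 : ∀ v, 0 ≤ u v) (husum : ∑ v, u v = 1)
    (hu' : ∀ v, u' v = ∑ w, u w * Kb w v) :
    ((1:ℝ)/2 * ∑ v, ∑ w, pi v * Kb v w * |u v / pi v - u w / pi w|) ^ 2 / 6
      ≤ (∑ v, pi v * (u v / pi v * Real.log (u v / pi v)))
        - (∑ v, pi v * (u' v / pi v * Real.log (u' v / pi v))) := by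
  set h : R → ℝ := fun v => u v / pi v with hh
  set h' : R → ℝ := fun v => u' v / pi v with hh'
  have hh0 : ∀ v, 0 ≤ h v := fun v => div_nonneg (hu0 v) (hpi v).le
  have hπh : ∀ v, pi v * h v = u v := by
    intro v
    show pi v * (u v / pi v) = u v
    rw [mul_comm, div_mul_cancel₀ _ (hpi v).ne']
  have hcol : ∀ w, ∑ v, pi v * Kb v w = pi w := by
    intro w
    rw [Finset.sum_congr rfl (fun v _ => hrev v w), ← Finset.mul_sum, hrow, mul_one]
  have hsumh : ∑ v, pi v * h v = 1 := by
    rw [Finset.sum_congr rfl (fun v (_ : v ∈ Finset.univ) => hπh v)]; exact husum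
  have havg : ∀ v, h' v = ∑ w, Kb v w * h w := by
    intro v
    have e1 : ∀ w, u w * Kb w v = pi v * (Kb v w * h w) := by
      intro w
      have e0 : u w * Kb w v = h w * (pi w * Kb w v) := by rw [← hπh w]; ring
      rw [e0, ← hrev v w]; ring
    have e2 : u' v = pi v * ∑ w, Kb v w * h w := by
      rw [hu' v, Finset.sum_congr rfl (fun w _ => e1 w), ← Finset.mul_sum]
    show u' v / pi v = _
    rw [e2, mul_comm, mul_div_assoc, div_self (hpi v).ne', mul_one]
  have hh'0 : ∀ v, 0 ≤ h' v := by
    intro v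
    rw [havg v]
    exact Finset.sum_nonneg fun w _ => mul_nonneg (hKb0 v w) (hh0 w)
  have hsumh' : ∑ v, pi v * h' v = 1 := by
    have e1 : ∀ v, pi v * h' v = ∑ w, (pi v * Kb v w) * h w := by
      intro v; rw [havg v, Finset.mul_sum]; exact Finset.sum_congr rfl fun w _ => by ring
    rw [Finset.sum_congr rfl (fun v (_ : v ∈ Finset.univ) => e1 v), Finset.sum_comm]
    have e2 : ∀ w, ∑ v, (pi v * Kb v w) * h w = pi w * h w := by
      intro w; rw [← Finset.sum_mul, hcol]
    rw [Finset.sum_congr rfl (fun w (_ : w ∈ Finset.univ) => e2 w)]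
    exact hsumh
  set ent : ℝ → ℝ := fun x => x * Real.log x with hent
  have key : ∀ v, ∑ w, pi v * Kb v w *
        (ent (h w) - ent (h' v) - (Real.log (h' v) + 1) * (h w - h' v))
      = (∑ w, pi v * Kb v w * ent (h w)) - pi v * ent (h' v) := by
    intro v
    have e2 : ∑ w, pi v * Kb v w * ent (h' v) = pi v * ent (h' v) := by
      rw [← Finset.sum_mul, ← Finset.mul_sum, hrow, mul_one]
    have e3 : ∑ w, pi v * Kb v w * ((Real.log (h' v) + 1) * (h w - h' v)) = 0 := by
      have e4 : ∀ w, pi v * Kb v w * ((Real.log (h' v) + 1) * (h w - h' v))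
          = (Real.log (h' v) + 1) * (pi v * (Kb v w * h w) - pi v * (Kb v w * h' v)) := by
        intro w; ring
      rw [Finset.sum_congr rfl (fun w _ => e4 w), ← Finset.mul_sum]
      rw [Finset.sum_sub_distrib, ← Finset.mul_sum, ← Finset.mul_sum, ← havg v]
      rw [← Finset.sum_mul, hrow]
      ring_nf
    calc ∑ w, pi v * Kb v w * (ent (h w) - ent (h' v) - (Real.log (h' v) + 1) * (h w - h' v))
        = ∑ w, (pi v * Kb v w * ent (h w) - pi v * Kb v w * ent (h' v)
            - pi v * Kb v w * ((Real.log (h' v) + 1) * (h w - h' v))) := by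
          exact Finset.sum_congr rfl fun w _ => by ring
      _ = (∑ w, pi v * Kb v w * ent (h w)) - (∑ w, pi v * Kb v w * ent (h' v))
            - ∑ w, pi v * Kb v w * ((Real.log (h' v) + 1) * (h w - h' v)) := by
          rw [Finset.sum_sub_distrib, Finset.sum_sub_distrib]
      _ = (∑ w, pi v * Kb v w * ent (h w)) - pi v * ent (h' v) := by
          rw [e2, e3]; ring
  have ident : (∑ v, pi v * ent (h v)) - (∑ v, pi v * ent (h' v))
      = ∑ v, ∑ w, pi v * Kb v w *
          (ent (h w) - ent (h' v) - (Real.log (h' v) + 1) * (h w - h' v)) := by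
    rw [Finset.sum_congr rfl (fun v (_ : v ∈ Finset.univ) => key v), Finset.sum_sub_distrib]
    congr 1
    rw [Finset.sum_comm]
    have e5 : ∀ w, ∑ v, pi v * Kb v w * ent (h w) = pi w * ent (h w) := by
      intro w; rw [← Finset.sum_mul, hcol]
    rw [Finset.sum_congr rfl (fun w (_ : w ∈ Finset.univ) => e5 w)]
  set sa : R → ℝ := fun v => Real.sqrt (h v) with hsa
  set sb : R → ℝ := fun v => Real.sqrt (h' v) with hsb
  have hsa0 : ∀ v, 0 ≤ sa v := fun v => Real.sqrt_nonneg _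
  have hsasq : ∀ v, sa v ^ 2 = h v := fun v => Real.sq_sqrt (hh0 v)
  have point : ∀ v w, pi v * Kb v w * (sa w - sb v) ^ 2
      ≤ pi v * Kb v w *
        (ent (h w) - ent (h' v) - (Real.log (h' v) + 1) * (h w - h' v)) := by
    intro v w
    rcases eq_or_lt_of_le (hKb0 v w) with hK | hK
    · rw [← hK]; simp
    rcases eq_or_lt_of_le (hh'0 v) with hb | hb
    · have hterm : Kb v w * h w = 0 := by
        have hsum0 : ∑ w, Kb v w * h w = 0 := by rw [← havg v, ← hb]
        exact (Finset.sum_eq_zero_iff_of_nonneg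
          (fun w _ => mul_nonneg (hKb0 v w) (hh0 w))).mp hsum0 w (Finset.mem_univ w)
      have hw0 : h w = 0 := by
        rcases mul_eq_zero.mp hterm with h1 | h1
        · exact absurd h1 hK.ne'
        · exact h1
      have l : sa w = 0 := by rw [hsa]; simp [hw0]
      have r : sb v = 0 := by rw [hsb]; simp [← hb]
      rw [l, r, hw0, ← hb]
      simp [hent]
    · apply mul_le_mul_of_nonneg_left _ (mul_nonneg (hpi v).le (hKb0 v w))
      have hkl := aux_kl (h w) (h' v) (hh0 w) hb
      have expand : ent (h w) - ent (h' v) - (Real.log (h' v) + 1) * (h w - h' v)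
          = h w * Real.log (h w) - h w * Real.log (h' v) - h w + h' v := by
        simp only [hent]; ring
      rw [expand]
      exact hkl
  have drop_ge_D' : (∑ v, ∑ w, pi v * Kb v w * (sa w - sb v) ^ 2)
      ≤ (∑ v, pi v * ent (h v)) - (∑ v, pi v * ent (h' v)) := by
    rw [ident]
    exact Finset.sum_le_sum fun v _ => Finset.sum_le_sum fun w _ => point v w
  set D' := ∑ v, ∑ w, pi v * Kb v w * (sa w - sb v) ^ 2 with hD'
  have diag_le : (∑ v, pi v * Kb v v * (sa v - sb v) ^ 2) ≤ D' := by
    rw [hD']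
    apply Finset.sum_le_sum
    intro v _
    exact Finset.single_le_sum (f := fun w => pi v * Kb v w * (sa w - sb v) ^ 2)
      (fun w _ => mul_nonneg (mul_nonneg (hpi v).le (hKb0 v w)) (sq_nonneg _))
      (Finset.mem_univ v)
  have lazy_bd : (∑ v, pi v * (sb v - sa v) ^ 2) ≤ 2 * D' := by
    have e1 : ∀ v, pi v * (sb v - sa v) ^ 2 ≤ 2 * (pi v * Kb v v * (sa v - sb v) ^ 2) := by
      intro v
      have h1 := hlazy v
      nlinarith [sq_nonneg (sa v - sb v), (hpi v).le,
        mul_nonneg (hpi v).le (sq_nonneg (sa v - sb v))]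
    calc (∑ v, pi v * (sb v - sa v) ^ 2)
        ≤ ∑ v, 2 * (pi v * Kb v v * (sa v - sb v) ^ 2) := Finset.sum_le_sum fun v _ => e1 v
      _ = 2 * ∑ v, pi v * Kb v v * (sa v - sb v) ^ 2 := by rw [Finset.mul_sum]
      _ ≤ 2 * D' := by linarith [diag_le]
  have rowconst : ∀ (c : R → ℝ), (∑ v, ∑ w, pi v * Kb v w * c v) = ∑ v, pi v * c v := by
    intro c
    apply Finset.sum_congr rfl
    intro v _
    rw [← Finset.sum_mul, ← Finset.mul_sum, hrow, mul_one]
  have D''_le : (∑ v, ∑ w, pi v * Kb v w * (sa w - sa v) ^ 2) ≤ 6 * D' := by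
    have pt : ∀ v w, pi v * Kb v w * (sa w - sa v) ^ 2
        ≤ 2 * (pi v * Kb v w * (sa w - sb v) ^ 2) + 2 * (pi v * Kb v w * (sb v - sa v) ^ 2) := by
      intro v w
      have h1 : (sa w - sa v) ^ 2 ≤ 2 * (sa w - sb v) ^ 2 + 2 * (sb v - sa v) ^ 2 := by
        nlinarith [sq_nonneg (sa w + sa v - 2 * sb v)]
      nlinarith [mul_nonneg (hpi v).le (hKb0 v w), mul_le_mul_of_nonneg_left h1
        (mul_nonneg (hpi v).le (hKb0 v w))]
    have step1 : (∑ v, ∑ w, pi v * Kb v w * (sa w - sa v) ^ 2)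
        ≤ ∑ v, ∑ w, (2 * (pi v * Kb v w * (sa w - sb v) ^ 2)
            + 2 * (pi v * Kb v w * (sb v - sa v) ^ 2)) :=
      Finset.sum_le_sum fun v _ => Finset.sum_le_sum fun w _ => pt v w
    have step2 : (∑ v, ∑ w, (2 * (pi v * Kb v w * (sa w - sb v) ^ 2)
            + 2 * (pi v * Kb v w * (sb v - sa v) ^ 2)))
        = 2 * D' + 2 * ∑ v, ∑ w, pi v * Kb v w * (sb v - sa v) ^ 2 := by
      rw [hD']
      simp only [Finset.sum_add_distrib, ← Finset.mul_sum]
    have step3 : (∑ v, ∑ w, pi v * Kb v w * (sb v - sa v) ^ 2)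
        = ∑ v, pi v * (sb v - sa v) ^ 2 := rowconst _
    calc (∑ v, ∑ w, pi v * Kb v w * (sa w - sa v) ^ 2)
        ≤ 2 * D' + 2 * ∑ v, ∑ w, pi v * Kb v w * (sb v - sa v) ^ 2 := by
          rw [← step2]; exact step1
      _ = 2 * D' + 2 * ∑ v, pi v * (sb v - sa v) ^ 2 := by rw [step3]
      _ ≤ 2 * D' + 2 * (2 * D') := by linarith [lazy_bd]
      _ = 6 * D' := by ring
  -- Cauchy–Schwarz: gradient² ≤ 4 D''
  have CS : (∑ v, ∑ w, pi v * Kb v w * |h v - h w|) ^ 2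
      ≤ 4 * (∑ v, ∑ w, pi v * Kb v w * (sa w - sa v) ^ 2) := by
    set F : R × R → ℝ := fun z => Real.sqrt (pi z.1 * Kb z.1 z.2) * |sa z.2 - sa z.1| with hF
    set Gg : R × R → ℝ := fun z => Real.sqrt (pi z.1 * Kb z.1 z.2) * (sa z.2 + sa z.1) with hGg
    have hFG : ∀ z : R × R, F z * Gg z = pi z.1 * Kb z.1 z.2 * |h z.1 - h z.2| := by
      intro z
      have hx : 0 ≤ pi z.1 * Kb z.1 z.2 := mul_nonneg (hpi z.1).le (hKb0 z.1 z.2)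
      have e1 : F z * Gg z = (pi z.1 * Kb z.1 z.2) * (|sa z.2 - sa z.1| * (sa z.2 + sa z.1)) := by
        show Real.sqrt (pi z.1 * Kb z.1 z.2) * |sa z.2 - sa z.1|
            * (Real.sqrt (pi z.1 * Kb z.1 z.2) * (sa z.2 + sa z.1)) = _
        calc Real.sqrt (pi z.1 * Kb z.1 z.2) * |sa z.2 - sa z.1|
              * (Real.sqrt (pi z.1 * Kb z.1 z.2) * (sa z.2 + sa z.1))
            = Real.sqrt (pi z.1 * Kb z.1 z.2) * Real.sqrt (pi z.1 * Kb z.1 z.2)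
              * (|sa z.2 - sa z.1| * (sa z.2 + sa z.1)) := by ring
          _ = (pi z.1 * Kb z.1 z.2) * (|sa z.2 - sa z.1| * (sa z.2 + sa z.1)) := by
              rw [Real.mul_self_sqrt hx]
      rw [e1]
      congr 1
      have e2 : |sa z.2 - sa z.1| * (sa z.2 + sa z.1) = |(sa z.2 - sa z.1) * (sa z.2 + sa z.1)| := by
        rw [abs_mul, abs_of_nonneg (by positivity : (0:ℝ) ≤ sa z.2 + sa z.1)]
      rw [e2]
      have e3 : (sa z.2 - sa z.1) * (sa z.2 + sa z.1) = h z.2 - h z.1 := by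
        linear_combination hsasq z.2 - hsasq z.1
      rw [e3]
      exact abs_sub_comm _ _
    have hF2 : ∀ z : R × R, F z ^ 2 = pi z.1 * Kb z.1 z.2 * (sa z.2 - sa z.1) ^ 2 := by
      intro z
      rw [hF, mul_pow, sq_abs, Real.sq_sqrt (mul_nonneg (hpi z.1).le (hKb0 z.1 z.2))]
    have hGg2 : (∑ z : R × R, Gg z ^ 2) ≤ 4 := by
      have pt : ∀ z : R × R, Gg z ^ 2
          ≤ pi z.1 * Kb z.1 z.2 * (2 * h z.2 + 2 * h z.1) := by
        intro z
        rw [hGg, mul_pow, Real.sq_sqrt (mul_nonneg (hpi z.1).le (hKb0 z.1 z.2))]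
        have h1 : (sa z.2 + sa z.1) ^ 2 ≤ 2 * h z.2 + 2 * h z.1 := by
          nlinarith [sq_nonneg (sa z.2 - sa z.1), hsasq z.1, hsasq z.2]
        exact mul_le_mul_of_nonneg_left h1 (mul_nonneg (hpi z.1).le (hKb0 z.1 z.2))
      have e1 : (∑ z : R × R, pi z.1 * Kb z.1 z.2 * (2 * h z.2 + 2 * h z.1)) = 4 := by
        rw [Fintype.sum_prod_type]
        have e2 : ∀ v, ∑ w, pi v * Kb v w * (2 * h w + 2 * h v)
            = 2 * (∑ w, (pi v * Kb v w) * h w) + 2 * (pi v * h v) := by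
          intro v
          rw [Finset.sum_congr rfl (fun w (_ : w ∈ Finset.univ) =>
            (by ring : pi v * Kb v w * (2 * h w + 2 * h v)
              = 2 * ((pi v * Kb v w) * h w) + 2 * ((pi v * Kb v w) * h v)))]
          rw [Finset.sum_add_distrib, ← Finset.mul_sum, ← Finset.mul_sum]
          congr 1
          rw [← Finset.sum_mul, ← Finset.mul_sum, hrow, mul_one]
        rw [Finset.sum_congr rfl (fun v (_ : v ∈ Finset.univ) => e2 v)]
        rw [Finset.sum_add_distrib, ← Finset.mul_sum, ← Finset.mul_sum]
        have e3 : (∑ v, ∑ w, (pi v * Kb v w) * h w) = 1 := by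
          rw [Finset.sum_comm]
          rw [Finset.sum_congr rfl (fun w (_ : w ∈ Finset.univ) =>
            (by rw [← Finset.sum_mul, hcol] : (∑ v, (pi v * Kb v w) * h w) = pi w * h w))]
          exact hsumh
        rw [e3, hsumh]
        norm_num
      calc (∑ z : R × R, Gg z ^ 2)
          ≤ ∑ z : R × R, pi z.1 * Kb z.1 z.2 * (2 * h z.2 + 2 * h z.1) :=
            Finset.sum_le_sum fun z _ => pt z
        _ = 4 := e1
    have hcs := Finset.sum_mul_sq_le_sq_mul_sq Finset.univ F Gg
    have lhs_eq : (∑ z : R × R, F z * Gg z) = ∑ v, ∑ w, pi v * Kb v w * |h v - h w| := by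
      rw [Finset.sum_congr rfl (fun z (_ : z ∈ Finset.univ) => hFG z)]
      rw [Fintype.sum_prod_type]
    have rhs1 : (∑ z : R × R, F z ^ 2) = ∑ v, ∑ w, pi v * Kb v w * (sa w - sa v) ^ 2 := by
      rw [Finset.sum_congr rfl (fun z (_ : z ∈ Finset.univ) => hF2 z)]
      rw [Fintype.sum_prod_type]
    calc (∑ v, ∑ w, pi v * Kb v w * |h v - h w|) ^ 2
        = (∑ z : R × R, F z * Gg z) ^ 2 := by rw [lhs_eq]
      _ ≤ (∑ z : R × R, F z ^ 2) * (∑ z : R × R, Gg z ^ 2) := hcs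
      _ ≤ (∑ z : R × R, F z ^ 2) * 4 := by
          apply mul_le_mul_of_nonneg_left hGg2
          exact Finset.sum_nonneg fun z _ => sq_nonneg _
      _ = 4 * (∑ v, ∑ w, pi v * Kb v w * (sa w - sa v) ^ 2) := by rw [rhs1]; ring
  -- assemble
  have final : ((1:ℝ)/2 * ∑ v, ∑ w, pi v * Kb v w * |h v - h w|) ^ 2 / 6
      ≤ (∑ v, pi v * ent (h v)) - (∑ v, pi v * ent (h' v)) := by
    have t1 : (∑ v, ∑ w, pi v * Kb v w * |h v - h w|) ^ 2 ≤ 24 * D' := by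
      calc (∑ v, ∑ w, pi v * Kb v w * |h v - h w|) ^ 2
          ≤ 4 * (∑ v, ∑ w, pi v * Kb v w * (sa w - sa v) ^ 2) := CS
        _ ≤ 4 * (6 * D') := by linarith [D''_le]
        _ = 24 * D' := by ring
    nlinarith [drop_ge_D', t1]
  exact final


lemma aux_coarea' {R : Type} [Fintype R] [DecidableEq R] [Nonempty R]
    (pi mh : R → ℝ) (W Winc : R → R → ℝ) (θ : ℝ)
    (hpi : ∀ v, 0 < pi v)
    (hW0 : ∀ u v, 0 ≤ W u v) (hWsym : ∀ u v, pi u * W u v = pi v * W v u)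
    (hWinc0 : ∀ u v, 0 ≤ Winc u v)
    (hm0 : ∀ v, 0 ≤ mh v)
    (hcut : ∀ S : Finset R, S.Nonempty →
      θ * (∑ u ∈ S, pi u) ≤ ∑ u ∈ S, pi u * ((∑ v ∈ Sᶜ, W u v) + ∑ v ∈ S, Winc u v)) :
    θ * (∑ v, mh v) ≤
      (1/2) * (∑ u, ∑ v, pi u * W u v * |mh u / pi u - mh v / pi v|)
        + ∑ u, ∑ v, mh u * Winc u v := by
  classical
  set n := Fintype.card R with hn
  have hn0 : 0 < n := Fintype.card_pos
  set fh : R → ℝ := fun v => mh v / pi v with hfhdef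
  have hfh0 : ∀ v, 0 ≤ fh v := fun v => div_nonneg (hm0 v) (hpi v).le
  have hπfh : ∀ v, pi v * fh v = mh v := by
    intro v
    show pi v * (mh v / pi v) = mh v
    rw [mul_comm, div_mul_cancel₀ _ (hpi v).ne']
  -- sorted enumeration, descending in fh
  set e0 : Fin n ≃ R := (Fintype.equivFin R).symm with he0
  set σ : Equiv.Perm (Fin n) := Tuple.sort (fun i => -fh (e0 i)) with hσ
  set e : Fin n ≃ R := σ.trans e0 with he
  have hanti : ∀ i j : Fin n, i ≤ j → fh (e j) ≤ fh (e i) := by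
    intro i j hij
    have hmono := Tuple.monotone_sort (fun i => -fh (e0 i))
    have := hmono hij
    simp only [Function.comp_apply] at this
    have he' : ∀ i : Fin n, e i = e0 (σ i) := fun i => rfl
    rw [he' i, he' j]
    linarith
  set idx : R → ℕ := fun v => ((e.symm v : Fin n) : ℕ) with hidx
  have hidxlt : ∀ v, idx v < n := fun v => (e.symm v).isLt
  set g : ℕ → ℝ := fun j => if hj : j < n then fh (e ⟨j, hj⟩) else 0 with hg
  have hgval : ∀ v, g (idx v) = fh v := by
    intro v
    rw [hg]
    simp only [hidxlt v, dif_pos]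
    congr 1
    have : (⟨idx v, hidxlt v⟩ : Fin n) = e.symm v := by
      apply Fin.ext; rfl
    rw [this, Equiv.apply_symm_apply]
  have hgn : g n = 0 := by rw [hg]; simp
  have hg0 : ∀ j, 0 ≤ g j := by
    intro j
    by_cases hj : j < n
    · simp only [hg, dif_pos hj]; exact hfh0 _
    · simp only [hg, dif_neg hj]; exact le_rfl
  have hgdec : ∀ j, g (j + 1) ≤ g j := by
    intro j
    by_cases hj1 : j + 1 < n
    · have hj : j < n := Nat.lt_of_succ_lt hj1
      simp only [hg, dif_pos hj1, dif_pos hj]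
      exact hanti ⟨j, hj⟩ ⟨j+1, hj1⟩ (by simp [Fin.le_def])
    · by_cases hj : j < n
      · simp only [hg, dif_neg hj1, dif_pos hj]
        exact hfh0 _
      · simp only [hg, dif_neg hj1, dif_neg hj]; exact le_rfl
  set γ : ℕ → ℝ := fun j => g j - g (j + 1) with hγ
  have hγ0 : ∀ j, 0 ≤ γ j := fun j => sub_nonneg.mpr (hgdec j)
  -- telescoping sums
  have tele : ∀ a b : ℕ, a ≤ b → (∑ j ∈ Finset.Ico a b, γ j) = g a - g b := by
    intro a b hab
    rw [hγ]
    rw [Finset.sum_Ico_eq_sub _ hab, Finset.sum_range_sub' g, Finset.sum_range_sub' g]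
    ring
  have tele1 : ∀ u, (∑ j ∈ Finset.range n, if idx u ≤ j then γ j else 0) = fh u := by
    intro u
    rw [← Finset.sum_filter]
    have hfil : (Finset.range n).filter (fun j => idx u ≤ j) = Finset.Ico (idx u) n := by
      ext j
      simp only [Finset.mem_filter, Finset.mem_range, Finset.mem_Ico]
      constructor
      · rintro ⟨h1, h2⟩; exact ⟨h2, h1⟩
      · rintro ⟨h1, h2⟩; exact ⟨h2, h1⟩
    rw [hfil, tele _ _ (hidxlt u).le, hgn, hgval u, sub_zero]
  have tele2 : ∀ u v, (∑ j ∈ Finset.range n, if idx u ≤ j ∧ ¬ idx v ≤ j then γ j else 0)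
      ≤ (fh u - fh v + |fh u - fh v|) / 2 := by
    intro u v
    rw [← Finset.sum_filter]
    have hfil : (Finset.range n).filter (fun j => idx u ≤ j ∧ ¬ idx v ≤ j)
        = Finset.Ico (idx u) (min (idx v) n) := by
      ext j
      simp only [Finset.mem_filter, Finset.mem_range, Finset.mem_Ico, not_le, lt_min_iff]
      omega
    rw [hfil]
    have hminv : min (idx v) n = idx v := min_eq_left (hidxlt v).le
    rw [hminv]
    rcases le_or_gt (idx v) (idx u) with hle | hlt
    · rw [Finset.Ico_eq_empty (by omega), Finset.sum_empty]
      have := abs_nonneg (fh u - fh v)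
      have := neg_abs_le (fh u - fh v)
      linarith
    · rw [tele _ _ hlt.le, hgval u, hgval v]
      have := le_abs_self (fh u - fh v)
      linarith
  have tele3 : ∀ u v, (∑ j ∈ Finset.range n, if idx u ≤ j ∧ idx v ≤ j then γ j else 0)
      ≤ fh u := by
    intro u v
    rw [← tele1 u]
    apply Finset.sum_le_sum
    intro j _
    split
    · rename_i hcond
      rw [if_pos hcond.1]
    · split
      · exact hγ0 j
      · exact le_refl 0
  -- prefix sets
  set Pset : ℕ → Finset R := fun j => Finset.univ.filter (fun v => idx v ≤ j) with hPset
  have hPmem : ∀ j v, v ∈ Pset j ↔ idx v ≤ j := by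
    intro j v; rw [hPset]; simp
  have hPne : ∀ j, (Pset j).Nonempty := by
    intro j
    refine ⟨e ⟨0, hn0⟩, ?_⟩
    rw [hPmem]
    have : idx (e ⟨0, hn0⟩) = 0 := by
      rw [hidx]
      simp [Equiv.symm_apply_apply]
    omega
  -- indicator form of the cut hypothesis
  have hcut' : ∀ j : ℕ, θ * (∑ u, if idx u ≤ j then pi u else 0)
      ≤ (∑ u, ∑ v, if idx u ≤ j ∧ ¬ idx v ≤ j then pi u * W u v else 0)
        + (∑ u, ∑ v, if idx u ≤ j ∧ idx v ≤ j then pi u * Winc u v else 0) := by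
    intro j
    have h1 := hcut (Pset j) (hPne j)
    have l1 : (∑ u ∈ Pset j, pi u) = ∑ u, if idx u ≤ j then pi u else 0 := by
      rw [hPset, Finset.sum_filter]
    have r1 : (∑ u ∈ Pset j, pi u * ((∑ v ∈ (Pset j)ᶜ, W u v) + ∑ v ∈ Pset j, Winc u v))
        = (∑ u, ∑ v, if idx u ≤ j ∧ ¬ idx v ≤ j then pi u * W u v else 0)
          + (∑ u, ∑ v, if idx u ≤ j ∧ idx v ≤ j then pi u * Winc u v else 0) := by
      rw [hPset, Finset.sum_filter]
      have per_u : ∀ u, (if idx u ≤ j then pi u *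
            ((∑ v ∈ (Finset.univ.filter fun v => idx v ≤ j)ᶜ, W u v)
              + ∑ v ∈ Finset.univ.filter (fun v => idx v ≤ j), Winc u v) else 0)
          = (∑ v, if idx u ≤ j ∧ ¬ idx v ≤ j then pi u * W u v else 0)
            + (∑ v, if idx u ≤ j ∧ idx v ≤ j then pi u * Winc u v else 0) := by
        intro u
        by_cases hu : idx u ≤ j
        · rw [if_pos hu, mul_add]
          congr 1
          · rw [show (Finset.univ.filter fun v => idx v ≤ j)ᶜ
                = Finset.univ.filter (fun v => ¬ idx v ≤ j) from by ext v; simp]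
            rw [Finset.sum_filter, Finset.mul_sum]
            apply Finset.sum_congr rfl
            intro v _
            by_cases hv : idx v ≤ j <;> simp [hu, hv]
          · rw [Finset.sum_filter, Finset.mul_sum]
            apply Finset.sum_congr rfl
            intro v _
            by_cases hv : idx v ≤ j <;> simp [hu, hv]
        · rw [if_neg hu]
          have z1 : ∀ v, (if idx u ≤ j ∧ ¬ idx v ≤ j then pi u * W u v else 0) = 0 := by
            intro v; simp [hu]
          have z2 : ∀ v, (if idx u ≤ j ∧ idx v ≤ j then pi u * Winc u v else 0) = 0 := by
            intro v; simp [hu]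
          rw [Finset.sum_congr rfl (fun v (_ : v ∈ Finset.univ) => z1 v),
            Finset.sum_congr rfl (fun v (_ : v ∈ Finset.univ) => z2 v)]
          simp
      rw [Finset.sum_congr rfl (fun u (_ : u ∈ Finset.univ) => per_u u), Finset.sum_add_distrib]
    rw [← l1, ← r1]
    exact h1
  have swap3 : ∀ (F : ℕ → R → R → ℝ),
      (∑ j ∈ Finset.range n, ∑ u, ∑ v, F j u v) = ∑ u, ∑ v, ∑ j ∈ Finset.range n, F j u v := by
    intro F
    rw [Finset.sum_comm]
    exact Finset.sum_congr rfl fun u _ => Finset.sum_comm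
  -- LHS identity
  have lhs_eq : (∑ j ∈ Finset.range n, γ j * (θ * (∑ u, if idx u ≤ j then pi u else 0)))
      = θ * (∑ v, mh v) := by
    have e1 : ∀ j, γ j * (θ * (∑ u, if idx u ≤ j then pi u else 0))
        = θ * ∑ u, (if idx u ≤ j then γ j * pi u else 0) := by
      intro j
      rw [Finset.mul_sum, Finset.mul_sum, Finset.mul_sum]
      apply Finset.sum_congr rfl
      intro u _
      by_cases hu : idx u ≤ j <;> simp [hu] <;> ring
    rw [Finset.sum_congr rfl (fun j (_ : j ∈ Finset.range n) => e1 j), ← Finset.mul_sum]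
    congr 1
    rw [Finset.sum_comm]
    have e2 : ∀ u, (∑ j ∈ Finset.range n, if idx u ≤ j then γ j * pi u else 0) = mh u := by
      intro u
      have e3 : ∀ j, (if idx u ≤ j then γ j * pi u else 0)
          = pi u * (if idx u ≤ j then γ j else 0) := by
        intro j; by_cases hu : idx u ≤ j <;> simp [hu] <;> ring
      rw [Finset.sum_congr rfl (fun j (_ : j ∈ Finset.range n) => e3 j), ← Finset.mul_sum,
        tele1 u]
      exact hπfh u
    exact Finset.sum_congr rfl (fun u _ => e2 u)
  -- main inequality, summed over j with weights γ
  have main : θ * (∑ v, mh v) ≤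
      (∑ j ∈ Finset.range n, γ j * ((∑ u, ∑ v, if idx u ≤ j ∧ ¬ idx v ≤ j then pi u * W u v else 0)
        + (∑ u, ∑ v, if idx u ≤ j ∧ idx v ≤ j then pi u * Winc u v else 0))) := by
    rw [← lhs_eq]
    apply Finset.sum_le_sum
    intro j _
    exact mul_le_mul_of_nonneg_left (hcut' j) (hγ0 j)
  -- split RHS
  have split : (∑ j ∈ Finset.range n, γ j *
        ((∑ u, ∑ v, if idx u ≤ j ∧ ¬ idx v ≤ j then pi u * W u v else 0)
          + (∑ u, ∑ v, if idx u ≤ j ∧ idx v ≤ j then pi u * Winc u v else 0)))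
      = (∑ j ∈ Finset.range n, γ j * (∑ u, ∑ v, if idx u ≤ j ∧ ¬ idx v ≤ j then pi u * W u v else 0))
        + (∑ j ∈ Finset.range n, γ j * (∑ u, ∑ v, if idx u ≤ j ∧ idx v ≤ j then pi u * Winc u v else 0)) := by
    rw [← Finset.sum_add_distrib]
    exact Finset.sum_congr rfl fun j _ => by ring
  -- rearrange the OUT part
  have out_rearr : (∑ j ∈ Finset.range n, γ j *
        (∑ u, ∑ v, if idx u ≤ j ∧ ¬ idx v ≤ j then pi u * W u v else 0))
      = ∑ u, ∑ v, (pi u * W u v) *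
          (∑ j ∈ Finset.range n, if idx u ≤ j ∧ ¬ idx v ≤ j then γ j else 0) := by
    have e1 : ∀ j, γ j * (∑ u, ∑ v, if idx u ≤ j ∧ ¬ idx v ≤ j then pi u * W u v else 0)
        = ∑ u, ∑ v, (if idx u ≤ j ∧ ¬ idx v ≤ j then (pi u * W u v) * γ j else 0) := by
      intro j
      rw [Finset.mul_sum]
      apply Finset.sum_congr rfl
      intro u _
      rw [Finset.mul_sum]
      apply Finset.sum_congr rfl
      intro v _
      by_cases hc : idx u ≤ j ∧ ¬ idx v ≤ j <;> simp [hc] <;> ring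
    rw [Finset.sum_congr rfl (fun j (_ : j ∈ Finset.range n) => e1 j), swap3]
    apply Finset.sum_congr rfl
    intro u _
    apply Finset.sum_congr rfl
    intro v _
    rw [Finset.mul_sum]
    apply Finset.sum_congr rfl
    intro j _
    by_cases hc : idx u ≤ j ∧ ¬ idx v ≤ j <;> simp [hc] <;> ring
  have inc_rearr : (∑ j ∈ Finset.range n, γ j *
        (∑ u, ∑ v, if idx u ≤ j ∧ idx v ≤ j then pi u * Winc u v else 0))
      = ∑ u, ∑ v, (pi u * Winc u v) *
          (∑ j ∈ Finset.range n, if idx u ≤ j ∧ idx v ≤ j then γ j else 0) := by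
    have e1 : ∀ j, γ j * (∑ u, ∑ v, if idx u ≤ j ∧ idx v ≤ j then pi u * Winc u v else 0)
        = ∑ u, ∑ v, (if idx u ≤ j ∧ idx v ≤ j then (pi u * Winc u v) * γ j else 0) := by
      intro j
      rw [Finset.mul_sum]
      apply Finset.sum_congr rfl
      intro u _
      rw [Finset.mul_sum]
      apply Finset.sum_congr rfl
      intro v _
      by_cases hc : idx u ≤ j ∧ idx v ≤ j <;> simp [hc] <;> ring
    rw [Finset.sum_congr rfl (fun j (_ : j ∈ Finset.range n) => e1 j), swap3]
    apply Finset.sum_congr rfl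
    intro u _
    apply Finset.sum_congr rfl
    intro v _
    rw [Finset.mul_sum]
    apply Finset.sum_congr rfl
    intro j _
    by_cases hc : idx u ≤ j ∧ idx v ≤ j <;> simp [hc] <;> ring
  -- antisymmetric sum vanishes
  have hzero : (∑ u, ∑ v, pi u * W u v * (fh u - fh v)) = 0 := by
    have h1 : (∑ u, ∑ v, pi u * W u v * fh v) = ∑ u, ∑ v, pi u * W u v * fh u := by
      calc (∑ u, ∑ v, pi u * W u v * fh v)
          = ∑ u, ∑ v, pi v * W v u * fh v := by
            apply Finset.sum_congr rfl; intro u _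
            apply Finset.sum_congr rfl; intro v _
            rw [hWsym u v]
        _ = ∑ v, ∑ u, pi v * W v u * fh v := Finset.sum_comm
        _ = ∑ u, ∑ v, pi u * W u v * fh u := rfl
    have h2 : (∑ u, ∑ v, pi u * W u v * (fh u - fh v))
        = (∑ u, ∑ v, pi u * W u v * fh u) - (∑ u, ∑ v, pi u * W u v * fh v) := by
      rw [← Finset.sum_sub_distrib]
      apply Finset.sum_congr rfl; intro u _
      rw [← Finset.sum_sub_distrib]
      apply Finset.sum_congr rfl; intro v _
      ring
    rw [h2, h1, sub_self]
  -- bound OUT part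
  have out_bound : (∑ u, ∑ v, (pi u * W u v) *
        (∑ j ∈ Finset.range n, if idx u ≤ j ∧ ¬ idx v ≤ j then γ j else 0))
      ≤ (1/2) * (∑ u, ∑ v, pi u * W u v * |fh u - fh v|) := by
    have step1 : (∑ u, ∑ v, (pi u * W u v) *
          (∑ j ∈ Finset.range n, if idx u ≤ j ∧ ¬ idx v ≤ j then γ j else 0))
        ≤ ∑ u, ∑ v, (pi u * W u v) * ((fh u - fh v + |fh u - fh v|) / 2) := by
      apply Finset.sum_le_sum; intro u _
      apply Finset.sum_le_sum; intro v _
      exact mul_le_mul_of_nonneg_left (tele2 u v) (mul_nonneg (hpi u).le (hW0 u v))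
    have step2 : (∑ u, ∑ v, (pi u * W u v) * ((fh u - fh v + |fh u - fh v|) / 2))
        = (1/2) * ((∑ u, ∑ v, pi u * W u v * (fh u - fh v))
            + (∑ u, ∑ v, pi u * W u v * |fh u - fh v|)) := by
      have eA : (∑ u, ∑ v, (pi u * W u v) * ((fh u - fh v + |fh u - fh v|) / 2))
          = ∑ u, ∑ v, ((1:ℝ)/2 * (pi u * W u v * (fh u - fh v))
              + (1:ℝ)/2 * (pi u * W u v * |fh u - fh v|)) := by
        apply Finset.sum_congr rfl; intro u _
        apply Finset.sum_congr rfl; intro v _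
        ring
      rw [eA]
      simp only [Finset.sum_add_distrib, ← Finset.mul_sum]
      ring
    rw [step2, hzero] at step1
    calc (∑ u, ∑ v, (pi u * W u v) *
          (∑ j ∈ Finset.range n, if idx u ≤ j ∧ ¬ idx v ≤ j then γ j else 0))
        ≤ (1/2) * (0 + ∑ u, ∑ v, pi u * W u v * |fh u - fh v|) := step1
      _ = (1/2) * (∑ u, ∑ v, pi u * W u v * |fh u - fh v|) := by ring
  -- bound INC part
  have inc_bound : (∑ u, ∑ v, (pi u * Winc u v) *
        (∑ j ∈ Finset.range n, if idx u ≤ j ∧ idx v ≤ j then γ j else 0))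
      ≤ ∑ u, ∑ v, mh u * Winc u v := by
    apply Finset.sum_le_sum; intro u _
    apply Finset.sum_le_sum; intro v _
    calc (pi u * Winc u v) * (∑ j ∈ Finset.range n, if idx u ≤ j ∧ idx v ≤ j then γ j else 0)
        ≤ (pi u * Winc u v) * fh u :=
          mul_le_mul_of_nonneg_left (tele3 u v) (mul_nonneg (hpi u).le (hWinc0 u v))
      _ = mh u * Winc u v := by rw [← hπfh u]; ring
  calc θ * (∑ v, mh v)
      ≤ (∑ j ∈ Finset.range n, γ j *
          ((∑ u, ∑ v, if idx u ≤ j ∧ ¬ idx v ≤ j then pi u * W u v else 0)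
            + (∑ u, ∑ v, if idx u ≤ j ∧ idx v ≤ j then pi u * Winc u v else 0))) := main
    _ = (∑ u, ∑ v, (pi u * W u v) *
          (∑ j ∈ Finset.range n, if idx u ≤ j ∧ ¬ idx v ≤ j then γ j else 0))
        + (∑ u, ∑ v, (pi u * Winc u v) *
          (∑ j ∈ Finset.range n, if idx u ≤ j ∧ idx v ≤ j then γ j else 0)) := by
        rw [split, out_rearr, inc_rearr]
    _ ≤ (1/2) * (∑ u, ∑ v, pi u * W u v * |fh u - fh v|) + ∑ u, ∑ v, mh u * Winc u v :=
        add_le_add out_bound inc_bound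



/-- One-step lemma: under the contradiction hypothesis (all labeled cuts ≥ θ) and small
ambiguity at two consecutive times, relative entropy drops by ≥ θ²/24. -/
lemma aux_step {Q : ℕ} (hQ : 2 ≤ Q) {R : Type} [Fintype R] [DecidableEq R] [Nonempty R]
    (piR : R → ℝ) (K : Equiv.Perm (Fin Q) → R → R → ℝ) (θ ω : ℝ)
    (hpi : ∀ u, 0 < piR u)
    (hK0 : ∀ g u v, 0 ≤ K g u v)
    (hrow : ∀ u, ∑ v : R, ∑ g : Equiv.Perm (Fin Q), K g u v = 1)
    (hrev : ∀ g u v, piR u * K g u v = piR v * K g⁻¹ v u)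
    (hlazy : ∀ u, (1 / 2 : ℝ) ≤ K 1 u u)
    (hθpos : 0 < θ) (hθ : θ ≤ 1/2) (hω : ω ≤ θ/10)
    (p p' : R → Fin Q → ℝ)
    (hp0 : ∀ v b, 0 ≤ p v b)
    (hpsum : ∑ v, ∑ b, p v b = 1)
    (hp' : ∀ v c, p' v c
      = ∑ w, ∑ b, p w b * (∑ g : Equiv.Perm (Fin Q), if g b = c then K g w v else 0))
    (hAmb : ∑ v, ((∑ b, p v b) - ⨆ b, p v b) ≤ ω)
    (hAmb' : ∑ v, ((∑ b, p' v b) - ⨆ b, p' v b) ≤ ω)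
    (hbeta : ∀ S : Finset R, S.Nonempty → ∀ ℓ : R → Fin Q,
      θ * (∑ u ∈ S, piR u) ≤ ∑ u ∈ S, piR u *
        ((∑ v ∈ Sᶜ, ∑ g : Equiv.Perm (Fin Q), K g u v) +
          ∑ v ∈ S, ∑ g : Equiv.Perm (Fin Q), if ℓ v ≠ g (ℓ u) then K g u v else 0)) :
    θ^2/24 ≤ (∑ v, piR v * ((∑ b, p v b) / piR v * Real.log ((∑ b, p v b) / piR v)))
        - (∑ v, piR v * ((∑ b, p' v b) / piR v * Real.log ((∑ b, p' v b) / piR v))) := by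
  classical
  have hQ0 : 0 < Q := by omega
  haveI : Nonempty (Fin Q) := ⟨⟨0, hQ0⟩⟩
  set uf : R → ℝ := fun v => ∑ b, p v b with huf
  set uf' : R → ℝ := fun v => ∑ b, p' v b with huf'
  set Kb : R → R → ℝ := fun w v => ∑ g : Equiv.Perm (Fin Q), K g w v with hKbdef
  have hKb0 : ∀ w v, 0 ≤ Kb w v := fun w v => Finset.sum_nonneg fun g _ => hK0 g w v
  have hKbrow : ∀ w, ∑ v, Kb w v = 1 := hrow
  have hKbrev : ∀ w v, piR w * Kb w v = piR v * Kb v w := by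
    intro w v
    show piR w * (∑ g : Equiv.Perm (Fin Q), K g w v) = piR v * (∑ g : Equiv.Perm (Fin Q), K g v w)
    rw [Finset.mul_sum, Finset.mul_sum]
    rw [Finset.sum_congr rfl (fun g (_ : g ∈ Finset.univ) => hrev g w v)]
    exact Equiv.sum_comp (Equiv.inv (Equiv.Perm (Fin Q))) (fun g => piR v * K g v w)
  have hKblazy : ∀ v, (1/2 : ℝ) ≤ Kb v v := by
    intro v
    calc (1/2 : ℝ) ≤ K 1 v v := hlazy v
      _ ≤ Kb v v := Finset.single_le_sum (f := fun g => K g v v)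
          (fun g _ => hK0 g v v) (Finset.mem_univ 1)
  have hp'0 : ∀ v c, 0 ≤ p' v c := by
    intro v c
    rw [hp' v c]
    apply Finset.sum_nonneg; intro w _
    apply Finset.sum_nonneg; intro b _
    apply mul_nonneg (hp0 w b)
    apply Finset.sum_nonneg; intro g _
    split <;> [exact hK0 g w v; exact le_rfl]
  have huf0 : ∀ v, 0 ≤ uf v := fun v => Finset.sum_nonneg fun b _ => hp0 v b
  have hufsum : ∑ v, uf v = 1 := hpsum
  have huf'det : ∀ v, uf' v = ∑ w, uf w * Kb w v := by
    intro v
    show (∑ c, p' v c) = _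
    rw [Finset.sum_congr rfl (fun c (_ : c ∈ Finset.univ) => hp' v c)]
    rw [Finset.sum_comm]
    apply Finset.sum_congr rfl
    intro w _
    rw [Finset.sum_comm]
    have e1 : ∀ b, (∑ c, p w b * (∑ g : Equiv.Perm (Fin Q), if g b = c then K g w v else 0))
        = p w b * Kb w v := by
      intro b
      rw [← Finset.mul_sum]
      congr 1
      rw [Finset.sum_comm]
      apply Finset.sum_congr rfl
      intro g _
      rw [Finset.sum_ite_eq Finset.univ (g b) (fun _ => K g w v)]
      simp
    rw [Finset.sum_congr rfl (fun b (_ : b ∈ Finset.univ) => e1 b), ← Finset.sum_mul]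
  -- majority labels
  have hchoice : ∀ v, ∃ b0, (⨆ b, p v b) = p v b0 ∧ ∀ b, p v b ≤ p v b0 :=
    fun v => aux_sup_exists hQ0 (p v)
  have hchoice' : ∀ v, ∃ b0, (⨆ b, p' v b) = p' v b0 ∧ ∀ b, p' v b ≤ p' v b0 :=
    fun v => aux_sup_exists hQ0 (p' v)
  set L : R → Fin Q := fun v => (hchoice v).choose with hL
  set L' : R → Fin Q := fun v => (hchoice' v).choose with hL'
  have hLm : ∀ v, (⨆ b, p v b) = p v (L v) := fun v => (hchoice v).choose_spec.1
  have hL'm : ∀ v, (⨆ b, p' v b) = p' v (L' v) := fun v => (hchoice' v).choose_spec.1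
  set m : R → ℝ := fun v => p v (L v) with hm
  set m' : R → ℝ := fun v => p' v (L' v) with hm'
  have hm0 : ∀ v, 0 ≤ m v := fun v => hp0 v (L v)
  have hmu : ∀ v, m v ≤ uf v := fun v =>
    Finset.single_le_sum (f := fun b => p v b) (fun b _ => hp0 v b) (Finset.mem_univ (L v))
  have hmu' : ∀ v, m' v ≤ uf' v := fun v =>
    Finset.single_le_sum (f := fun b => p' v b) (fun b _ => hp'0 v b) (Finset.mem_univ (L' v))
  have hAmbm : (∑ v, (uf v - m v)) ≤ ω := by
    calc (∑ v, (uf v - m v)) = ∑ v, ((∑ b, p v b) - ⨆ b, p v b) := by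
          apply Finset.sum_congr rfl; intro v _; rw [hLm v]
      _ ≤ ω := hAmb
  have hAmbm' : (∑ v, (uf' v - m' v)) ≤ ω := by
    calc (∑ v, (uf' v - m' v)) = ∑ v, ((∑ b, p' v b) - ⨆ b, p' v b) := by
          apply Finset.sum_congr rfl; intro v _; rw [hL'm v]
      _ ≤ ω := hAmb'
  have hω0 : 0 ≤ ω :=
    le_trans (Finset.sum_nonneg fun v _ => sub_nonneg.mpr (hmu v)) hAmbm
  have hAmbErase : ∀ v, uf' v - m' v = ∑ c ∈ Finset.univ.erase (L' v), p' v c := by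
    intro v
    have h1 := Finset.add_sum_erase Finset.univ (p' v) (Finset.mem_univ (L' v))
    have h2 : uf' v = ∑ c, p' v c := rfl
    rw [h2, ← h1, hm']
    ring
  -- budget E1 : inconsistent flow from majority section (target labels L') is ≤ ω
  have E1 : (∑ w, ∑ v, ∑ g : Equiv.Perm (Fin Q),
      if L' v ≠ g (L w) then m w * K g w v else 0) ≤ ω := by
    have per_v : ∀ v, (∑ w, ∑ g : Equiv.Perm (Fin Q),
        if L' v ≠ g (L w) then m w * K g w v else 0) ≤ uf' v - m' v := by
      intro v
      rw [hAmbErase v]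
      have e1 : ∀ w (g : Equiv.Perm (Fin Q)), (if L' v ≠ g (L w) then m w * K g w v else 0)
          = ∑ c ∈ Finset.univ.erase (L' v), (if g (L w) = c then m w * K g w v else 0) := by
        intro w g
        rw [Finset.sum_ite_eq (Finset.univ.erase (L' v)) (g (L w)) (fun _ => m w * K g w v)]
        congr 1
        simp only [Finset.mem_erase, Finset.mem_univ, and_true, eq_iff_iff]
        constructor
        · intro h; exact fun hc => h hc.symm
        · intro h hc; exact h hc.symm
      have e2 : (∑ w, ∑ g : Equiv.Perm (Fin Q),
          if L' v ≠ g (L w) then m w * K g w v else 0)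
          = ∑ c ∈ Finset.univ.erase (L' v), ∑ w, ∑ g : Equiv.Perm (Fin Q),
              (if g (L w) = c then m w * K g w v else 0) := by
        rw [Finset.sum_congr rfl (fun w (_ : w ∈ Finset.univ) =>
          Finset.sum_congr rfl (fun g (_ : g ∈ Finset.univ) => e1 w g))]
        rw [Finset.sum_congr rfl (fun w (_ : w ∈ Finset.univ) => Finset.sum_comm)]
        exact Finset.sum_comm
      rw [e2]
      apply Finset.sum_le_sum
      intro c _
      -- ∑ w ∑ g (if g (L w) = c then m w * K g w v else 0) ≤ p' v c
      rw [hp' v c]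
      apply Finset.sum_le_sum
      intro w _
      have t1 : (∑ g : Equiv.Perm (Fin Q), if g (L w) = c then m w * K g w v else 0)
          = p w (L w) * (∑ g : Equiv.Perm (Fin Q), if g (L w) = c then K g w v else 0) := by
        rw [Finset.mul_sum]
        apply Finset.sum_congr rfl
        intro g _
        rw [hm]
        split <;> ring
      rw [t1]
      exact Finset.single_le_sum
        (f := fun b => p w b * (∑ g : Equiv.Perm (Fin Q), if g b = c then K g w v else 0))
        (fun b _ => mul_nonneg (hp0 w b) (Finset.sum_nonneg fun g _ => by
          split <;> [exact hK0 g w v; exact le_rfl]))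
        (Finset.mem_univ (L w))
    calc (∑ w, ∑ v, ∑ g : Equiv.Perm (Fin Q), if L' v ≠ g (L w) then m w * K g w v else 0)
        = ∑ v, ∑ w, ∑ g : Equiv.Perm (Fin Q), if L' v ≠ g (L w) then m w * K g w v else 0 :=
          Finset.sum_comm
      _ ≤ ∑ v, (uf' v - m' v) := Finset.sum_le_sum fun v _ => per_v v
      _ ≤ ω := hAmbm'
  -- budget E2 : mass of relabeled vertices is ≤ 2ω
  have E2 : (∑ w, if L w ≠ L' w then m w else 0) ≤ 2 * ω := by
    have per_w : ∀ w, (if L w ≠ L' w then m w else 0) ≤ 2 * (uf' w - m' w) := by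
      intro w
      by_cases hne : L w = L' w
      · rw [if_neg (by simpa using hne)]
        have := hmu' w
        linarith
      · rw [if_pos hne]
        have h1 : (1/2) * m w ≤ p' w (L w) := by
          have t2 : K 1 w w ≤ ∑ g : Equiv.Perm (Fin Q), if g (L w) = L w then K g w w else 0 := by
            have : (if (1 : Equiv.Perm (Fin Q)) (L w) = L w then K 1 w w else 0) = K 1 w w := by
              simp
            rw [← this]
            exact Finset.single_le_sum
              (f := fun g : Equiv.Perm (Fin Q) => if g (L w) = L w then K g w w else 0)
              (fun g _ => by split <;> [exact hK0 g w w; exact le_rfl])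
              (Finset.mem_univ 1)
          have t3 : (1/2) * m w ≤ m w * (∑ g : Equiv.Perm (Fin Q),
              if g (L w) = L w then K g w w else 0) := by
            have := le_trans (hlazy w) t2
            nlinarith [hm0 w]
          have t4 : m w * (∑ g : Equiv.Perm (Fin Q), if g (L w) = L w then K g w w else 0)
              ≤ p' w (L w) := by
            rw [hp' w (L w)]
            have inner : m w * (∑ g : Equiv.Perm (Fin Q), if g (L w) = L w then K g w w else 0)
                = p w (L w) * (∑ g : Equiv.Perm (Fin Q), if g (L w) = L w then K g w w else 0) := by
              rw [hm]
            rw [inner]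
            calc p w (L w) * (∑ g : Equiv.Perm (Fin Q), if g (L w) = L w then K g w w else 0)
                ≤ ∑ b, p w b * (∑ g : Equiv.Perm (Fin Q), if g b = L w then K g w w else 0) :=
                  Finset.single_le_sum
                    (f := fun b => p w b * (∑ g : Equiv.Perm (Fin Q), if g b = L w then K g w w else 0))
                    (fun b _ => mul_nonneg (hp0 w b) (Finset.sum_nonneg fun g _ => by
                      split <;> [exact hK0 g w w; exact le_rfl])) (Finset.mem_univ (L w))
              _ ≤ ∑ x, ∑ b, p x b * (∑ g : Equiv.Perm (Fin Q), if g b = L w then K g x w else 0) :=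
                  Finset.single_le_sum
                    (f := fun x => ∑ b, p x b * (∑ g : Equiv.Perm (Fin Q), if g b = L w then K g x w else 0))
                    (fun x _ => Finset.sum_nonneg fun b _ => mul_nonneg (hp0 x b)
                      (Finset.sum_nonneg fun g _ => by
                        split <;> [exact hK0 g x w; exact le_rfl])) (Finset.mem_univ w)
          linarith
        have h2 : p' w (L w) ≤ uf' w - m' w := by
          rw [hAmbErase w]
          exact Finset.single_le_sum (f := fun c => p' w c) (fun c _ => hp'0 w c)
            (Finset.mem_erase.mpr ⟨hne, Finset.mem_univ _⟩)
        linarith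
    calc (∑ w, if L w ≠ L' w then m w else 0) ≤ ∑ w, 2 * (uf' w - m' w) :=
          Finset.sum_le_sum fun w _ => per_w w
      _ = 2 * ∑ w, (uf' w - m' w) := by rw [Finset.mul_sum]
      _ ≤ 2 * ω := by linarith [hAmbm']
  -- inconsistency budget with labels L' on both sides
  set Winc : R → R → ℝ :=
    fun w v => ∑ g : Equiv.Perm (Fin Q), if L' v ≠ g (L' w) then K g w v else 0 with hWincdef
  have hWinc0 : ∀ w v, 0 ≤ Winc w v := fun w v => Finset.sum_nonneg fun g _ => by
    split <;> [exact hK0 g w v; exact le_rfl]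
  have INCb : (∑ w, ∑ v, m w * Winc w v) ≤ 3 * ω := by
    have pt : ∀ w v (g : Equiv.Perm (Fin Q)), (if L' v ≠ g (L' w) then m w * K g w v else 0)
        ≤ (if L' v ≠ g (L w) then m w * K g w v else 0)
          + (if L w ≠ L' w then m w * K g w v else 0) := by
      intro w v g
      have hnn : 0 ≤ m w * K g w v := mul_nonneg (hm0 w) (hK0 g w v)
      by_cases h1 : L' v ≠ g (L' w)
      · rw [if_pos h1]
        by_cases h2 : L' v ≠ g (L w)
        · rw [if_pos h2]
          have : (0:ℝ) ≤ if L w ≠ L' w then m w * K g w v else 0 := by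
            split <;> [exact hnn; exact le_rfl]
          linarith
        · push_neg at h2
          have h3 : L w ≠ L' w := by
            intro hc
            apply h1
            rw [← hc, ← h2]
          rw [if_neg (not_not_intro h2), if_pos h3]
          linarith
      · rw [if_neg h1]
        have a1 : (0:ℝ) ≤ if L' v ≠ g (L w) then m w * K g w v else 0 := by
          split <;> [exact hnn; exact le_rfl]
        have a2 : (0:ℝ) ≤ if L w ≠ L' w then m w * K g w v else 0 := by
          split <;> [exact hnn; exact le_rfl]
        linarith
    have expand : (∑ w, ∑ v, m w * Winc w v)
        = ∑ w, ∑ v, ∑ g : Equiv.Perm (Fin Q), (if L' v ≠ g (L' w) then m w * K g w v else 0) := by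
      apply Finset.sum_congr rfl; intro w _
      apply Finset.sum_congr rfl; intro v _
      show m w * (∑ g : Equiv.Perm (Fin Q), if L' v ≠ g (L' w) then K g w v else 0) = _
      rw [Finset.mul_sum]
      apply Finset.sum_congr rfl; intro g _
      split <;> ring
    have relab_flow : (∑ w, ∑ v, ∑ g : Equiv.Perm (Fin Q),
        (if L w ≠ L' w then m w * K g w v else 0)) ≤ 2 * ω := by
      have e1 : ∀ w, (∑ v, ∑ g : Equiv.Perm (Fin Q), (if L w ≠ L' w then m w * K g w v else 0))
          = (if L w ≠ L' w then m w else 0) := by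
        intro w
        by_cases hc : L w ≠ L' w
        · rw [if_pos hc]
          have : ∀ v, (∑ g : Equiv.Perm (Fin Q), (if L w ≠ L' w then m w * K g w v else 0))
              = m w * ∑ g : Equiv.Perm (Fin Q), K g w v := by
            intro v
            rw [Finset.mul_sum]
            apply Finset.sum_congr rfl; intro g _
            rw [if_pos hc]
          rw [Finset.sum_congr rfl (fun v (_ : v ∈ Finset.univ) => this v), ← Finset.mul_sum]
          rw [hrow w, mul_one]
        · rw [if_neg hc]
          apply Finset.sum_eq_zero; intro v _
          apply Finset.sum_eq_zero; intro g _
          rw [if_neg hc]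
      rw [Finset.sum_congr rfl (fun w (_ : w ∈ Finset.univ) => e1 w)]
      exact E2
    calc (∑ w, ∑ v, m w * Winc w v)
        = ∑ w, ∑ v, ∑ g : Equiv.Perm (Fin Q), (if L' v ≠ g (L' w) then m w * K g w v else 0) :=
          expand
      _ ≤ ∑ w, ∑ v, ∑ g : Equiv.Perm (Fin Q), ((if L' v ≠ g (L w) then m w * K g w v else 0)
            + (if L w ≠ L' w then m w * K g w v else 0)) := by
          apply Finset.sum_le_sum; intro w _
          apply Finset.sum_le_sum; intro v _
          apply Finset.sum_le_sum; intro g _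
          exact pt w v g
      _ = (∑ w, ∑ v, ∑ g : Equiv.Perm (Fin Q), (if L' v ≠ g (L w) then m w * K g w v else 0))
          + (∑ w, ∑ v, ∑ g : Equiv.Perm (Fin Q), (if L w ≠ L' w then m w * K g w v else 0)) := by
          simp only [Finset.sum_add_distrib]
      _ ≤ ω + 2 * ω := add_le_add E1 relab_flow
      _ = 3 * ω := by ring
  -- apply the co-area lemma
  have hcut : ∀ S : Finset R, S.Nonempty →
      θ * (∑ u ∈ S, piR u) ≤ ∑ u ∈ S, piR u * ((∑ v ∈ Sᶜ, Kb u v) + ∑ v ∈ S, Winc u v) :=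
    fun S hS => hbeta S hS L'
  have hco := aux_coarea' piR m Kb Winc θ hpi hKb0 hKbrev hWinc0 hm0 hcut
  have hsm : 1 - ω ≤ ∑ v, m v := by
    have e1 : ∑ v, (uf v - m v) = 1 - ∑ v, m v := by
      rw [Finset.sum_sub_distrib, hufsum]
    linarith [hAmbm]
  -- compare gradients of m/π and uf/π
  have hgradcomp : (1/2) * (∑ w, ∑ v, piR w * Kb w v * |m w / piR w - m v / piR v|)
      ≤ (1/2) * (∑ w, ∑ v, piR w * Kb w v * |uf w / piR w - uf v / piR v|) + ω := by
    have ptw : ∀ w v, piR w * Kb w v * |m w / piR w - m v / piR v|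
        ≤ piR w * Kb w v * |uf w / piR w - uf v / piR v|
          + Kb w v * (uf w - m w) + (piR w * Kb w v / piR v) * (uf v - m v) := by
      intro w v
      have hxw : 0 ≤ (uf w - m w) / piR w := div_nonneg (by linarith [hmu w]) (hpi w).le
      have hyv : 0 ≤ (uf v - m v) / piR v := div_nonneg (by linarith [hmu v]) (hpi v).le
      have e1 : m w / piR w = uf w / piR w - (uf w - m w) / piR w := by
        rw [div_sub_div_same]; ring_nf
      have e2 : m v / piR v = uf v / piR v - (uf v - m v) / piR v := by
        rw [div_sub_div_same]; ring_nf
      have habs : |m w / piR w - m v / piR v|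
          ≤ |uf w / piR w - uf v / piR v| + (uf w - m w) / piR w + (uf v - m v) / piR v := by
        rw [e1, e2]
        set A := uf w / piR w
        set B := uf v / piR v
        set x := (uf w - m w) / piR w
        set y := (uf v - m v) / piR v
        have t1 : A - x - (B - y) = (A - B) + (y - x) := by ring
        rw [t1]
        have t2 := abs_add_le (A - B) (y - x)
        have t3 : |y - x| ≤ y + x := by
          have h4 := abs_add_le y (-x)
          rw [abs_neg] at h4
          rw [abs_of_nonneg hyv, abs_of_nonneg hxw] at h4
          calc |y - x| = |y + -x| := by ring_nf
            _ ≤ y + x := h4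
        linarith [t2, t3]
      have hw0 : 0 ≤ piR w * Kb w v := mul_nonneg (hpi w).le (hKb0 w v)
      have := mul_le_mul_of_nonneg_left habs hw0
      have c1 : piR w * Kb w v * ((uf w - m w) / piR w) = Kb w v * (uf w - m w) := by
        have e3 : piR w * ((uf w - m w) / piR w) = uf w - m w := by
          rw [mul_comm, div_mul_cancel₀ _ (hpi w).ne']
        calc piR w * Kb w v * ((uf w - m w) / piR w)
            = Kb w v * (piR w * ((uf w - m w) / piR w)) := by ring
          _ = Kb w v * (uf w - m w) := by rw [e3]
      have c2 : piR w * Kb w v * ((uf v - m v) / piR v)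
          = (piR w * Kb w v / piR v) * (uf v - m v) := by ring
      calc piR w * Kb w v * |m w / piR w - m v / piR v|
          ≤ piR w * Kb w v * (|uf w / piR w - uf v / piR v|
              + (uf w - m w) / piR w + (uf v - m v) / piR v) := this
        _ = piR w * Kb w v * |uf w / piR w - uf v / piR v|
              + piR w * Kb w v * ((uf w - m w) / piR w)
              + piR w * Kb w v * ((uf v - m v) / piR v) := by ring
        _ = piR w * Kb w v * |uf w / piR w - uf v / piR v|
              + Kb w v * (uf w - m w) + (piR w * Kb w v / piR v) * (uf v - m v) := by
            rw [c1, c2]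
    have err1 : (∑ w, ∑ v, Kb w v * (uf w - m w)) ≤ ω := by
      have e1 : ∀ w, (∑ v, Kb w v * (uf w - m w)) = uf w - m w := by
        intro w
        rw [← Finset.sum_mul, hKbrow w, one_mul]
      rw [Finset.sum_congr rfl (fun w (_ : w ∈ Finset.univ) => e1 w)]
      exact hAmbm
    have err2 : (∑ w, ∑ v, (piR w * Kb w v / piR v) * (uf v - m v)) ≤ ω := by
      have e0 : (∑ w, ∑ v, (piR w * Kb w v / piR v) * (uf v - m v))
          = ∑ v, ∑ w, (piR w * Kb w v / piR v) * (uf v - m v) := Finset.sum_comm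
      rw [e0]
      have e1 : ∀ v, (∑ w, (piR w * Kb w v / piR v) * (uf v - m v)) = uf v - m v := by
        intro v
        have e2 : ∀ w, (piR w * Kb w v / piR v) * (uf v - m v) = Kb v w * (uf v - m v) := by
          intro w
          rw [hKbrev w v, mul_comm (piR v) (Kb v w), mul_div_assoc,
            div_self (hpi v).ne', mul_one]
        rw [Finset.sum_congr rfl (fun w (_ : w ∈ Finset.univ) => e2 w), ← Finset.sum_mul,
          hKbrow v, one_mul]
      rw [Finset.sum_congr rfl (fun v (_ : v ∈ Finset.univ) => e1 v)]
      exact hAmbm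
    have sum_ptw : (∑ w, ∑ v, piR w * Kb w v * |m w / piR w - m v / piR v|)
        ≤ (∑ w, ∑ v, piR w * Kb w v * |uf w / piR w - uf v / piR v|)
          + (∑ w, ∑ v, Kb w v * (uf w - m w))
          + (∑ w, ∑ v, (piR w * Kb w v / piR v) * (uf v - m v)) := by
      have step1 : (∑ w, ∑ v, piR w * Kb w v * |m w / piR w - m v / piR v|)
          ≤ ∑ w, ∑ v, (piR w * Kb w v * |uf w / piR w - uf v / piR v|
              + Kb w v * (uf w - m w) + (piR w * Kb w v / piR v) * (uf v - m v)) :=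
        Finset.sum_le_sum fun w _ => Finset.sum_le_sum fun v _ => ptw w v
      calc (∑ w, ∑ v, piR w * Kb w v * |m w / piR w - m v / piR v|)
          ≤ ∑ w, ∑ v, (piR w * Kb w v * |uf w / piR w - uf v / piR v|
              + Kb w v * (uf w - m w) + (piR w * Kb w v / piR v) * (uf v - m v)) := step1
        _ = (∑ w, ∑ v, piR w * Kb w v * |uf w / piR w - uf v / piR v|)
            + (∑ w, ∑ v, Kb w v * (uf w - m w))
            + (∑ w, ∑ v, (piR w * Kb w v / piR v) * (uf v - m v)) := by
            simp only [Finset.sum_add_distrib]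
    linarith [sum_ptw, err1, err2]
  -- gradient lower bound
  set G : ℝ := (1/2) * (∑ w, ∑ v, piR w * Kb w v * |uf w / piR w - uf v / piR v|) with hG
  have hGlow : θ/2 ≤ G := by
    have c1 : θ * (1 - ω) ≤ θ * (∑ v, m v) := mul_le_mul_of_nonneg_left hsm hθpos.le
    have hθω : θ * ω ≤ ω := by nlinarith
    have hθ1 : θ ≤ 1 := by linarith
    have : θ * (1 - ω) ≤ G + ω + 3 * ω := by
      have := hco
      linarith [INCb, hgradcomp]
    nlinarith
  -- conclude via the entropy step lemma
  have hent := aux_entropy_step piR Kb uf uf' hpi hKb0 hKbrow hKbrev hKblazy huf0 hufsum huf'det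
  have hfinal : G^2/6 ≤ (∑ v, piR v * (uf v / piR v * Real.log (uf v / piR v)))
      - (∑ v, piR v * (uf' v / piR v * Real.log (uf' v / piR v))) := by
    rw [hG]
    exact hent
  have hsq : (θ/2)^2 ≤ G^2 := pow_le_pow_left₀ (by linarith) hGlow 2
  calc θ^2/24 = (θ/2)^2/6 := by ring
    _ ≤ G^2/6 := by linarith
    _ ≤ _ := hfinal


/-- Majority sweep over trace times: if every `s` in a set `B` of `π_R`-mass `δ > 0` has some
label whose ambiguity stays `≤ ω` up to time `k`, with `k ≥ C_Q θ⁻² log(2|R|/δ)` and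
`ω ≤ c_Q θ`, then some nonempty `S ⊆ R` carries a labeling `ℓ` with `β_R(S,ℓ) < θ`. -/
theorem stmt5 (Q : ℕ) (hQ : 2 ≤ Q) :
    ∃ C > (0 : ℝ), ∃ c > (0 : ℝ),
      ∀ (R : Type) [Fintype R] [DecidableEq R] [Nonempty R],
      ∀ (piR : R → ℝ) (K : Equiv.Perm (Fin Q) → R → R → ℝ)
        (θ ω : ℝ) (k : ℕ) (B : Finset R),
        (∀ u, 0 < piR u) → (∑ u, piR u = 1) →
        (∀ g u v, 0 ≤ K g u v) →
        (∀ u, ∑ v : R, ∑ g : Equiv.Perm (Fin Q), K g u v = 1) →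
        (∀ g u v, piR u * K g u v = piR v * K g⁻¹ v u) →
        (∀ u, (1 / 2 : ℝ) ≤ K 1 u u) →
        0 < θ → 0 < ω → 0 < k →
        0 < (∑ u ∈ B, piR u) →
        (∀ s ∈ B, ∃ a : Fin Q, ∀ t ≤ k, AmbT K s a t ≤ ω) →
        C / θ ^ 2 * Real.log (2 * (Fintype.card R : ℝ) / ∑ u ∈ B, piR u) ≤ (k : ℝ) →
        ω ≤ c * θ →
        ∃ S : Finset R, S.Nonempty ∧ ∃ ℓ : R → Fin Q, betaTr piR K S ℓ < θ := by
  classical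
  have hQ0 : 0 < Q := by omega
  refine ⟨25, by norm_num, 1/10, by norm_num, ?_⟩
  intro R _ _ _ piR K θ ω k B hpi hsum hK0 hrow hrev hlazy hθpos hωpos hk hB hAmbB hklog hωθ
  by_cases hθbig : 1/2 < θ
  · -- singleton works when θ > 1/2
    obtain ⟨s0⟩ := ‹Nonempty R›
    refine ⟨{s0}, Finset.singleton_nonempty s0, fun _ => (⟨0, hQ0⟩ : Fin Q), ?_⟩
    unfold betaTr
    rw [Finset.sum_singleton, Finset.sum_singleton]
    set b0 : Fin Q := (⟨0, hQ0⟩ : Fin Q)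
    have hA : (∑ v ∈ ({s0} : Finset R)ᶜ, ∑ g : Equiv.Perm (Fin Q), K g s0 v)
        = 1 - ∑ g : Equiv.Perm (Fin Q), K g s0 s0 := by
      have h0 := Finset.sum_compl_add_sum ({s0} : Finset R)
        (fun v => ∑ g : Equiv.Perm (Fin Q), K g s0 v)
      rw [Finset.sum_singleton] at h0
      have h1 : ∑ v, ∑ g : Equiv.Perm (Fin Q), K g s0 v = 1 := hrow s0
      linarith
    have hBb : (∑ g : Equiv.Perm (Fin Q),
          if (fun _ => b0) s0 ≠ g ((fun _ => b0) s0) then K g s0 s0 else 0)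
        ≤ (∑ g : Equiv.Perm (Fin Q), K g s0 s0) - K 1 s0 s0 := by
      have h2 : (∑ g : Equiv.Perm (Fin Q),
            if (fun _ => b0) s0 ≠ g ((fun _ => b0) s0) then K g s0 s0 else 0)
          ≤ ∑ g : Equiv.Perm (Fin Q), (if g = 1 then 0 else K g s0 s0) := by
        apply Finset.sum_le_sum
        intro g _
        by_cases hg : g = 1
        · subst hg; simp
        · rw [if_neg hg]
          split
          · exact le_rfl
          · exact hK0 g s0 s0
      have h3 : (∑ g : Equiv.Perm (Fin Q), (if g = 1 then 0 else K g s0 s0))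
          = (∑ g : Equiv.Perm (Fin Q), K g s0 s0) - K 1 s0 s0 := by
        have h4 : (∑ g : Equiv.Perm (Fin Q), (if g = 1 then (0:ℝ) else K g s0 s0))
            = (if (1 : Equiv.Perm (Fin Q)) = 1 then (0:ℝ) else K 1 s0 s0)
              + ∑ g ∈ Finset.univ.erase (1 : Equiv.Perm (Fin Q)),
                  (if g = 1 then (0:ℝ) else K g s0 s0) :=
          (Finset.add_sum_erase Finset.univ
            (fun g : Equiv.Perm (Fin Q) => if g = 1 then (0:ℝ) else K g s0 s0)
            (Finset.mem_univ (1 : Equiv.Perm (Fin Q)))).symm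
        have h5 : (if (1 : Equiv.Perm (Fin Q)) = 1 then (0:ℝ) else K 1 s0 s0) = 0 := by simp
        have h6 : (∑ g ∈ Finset.univ.erase (1 : Equiv.Perm (Fin Q)),
              (if g = 1 then (0:ℝ) else K g s0 s0))
            = ∑ g ∈ Finset.univ.erase (1 : Equiv.Perm (Fin Q)), K g s0 s0 := by
          apply Finset.sum_congr rfl
          intro g hg
          exact if_neg (Finset.mem_erase.mp hg).1
        have h7 : K 1 s0 s0 + ∑ g ∈ Finset.univ.erase (1 : Equiv.Perm (Fin Q)), K g s0 s0
            = ∑ g : Equiv.Perm (Fin Q), K g s0 s0 :=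
          Finset.add_sum_erase Finset.univ
            (fun g : Equiv.Perm (Fin Q) => K g s0 s0)
            (Finset.mem_univ (1 : Equiv.Perm (Fin Q)))
        rw [h4, h5, h6]
        linarith
      linarith
    have hlz := hlazy s0
    have hfin : (piR s0)⁻¹ * (piR s0 * ((∑ v ∈ ({s0} : Finset R)ᶜ,
          ∑ g : Equiv.Perm (Fin Q), K g s0 v) +
        ∑ g : Equiv.Perm (Fin Q),
          if (fun _ => b0) s0 ≠ g ((fun _ => b0) s0) then K g s0 s0 else 0))
        = ((∑ v ∈ ({s0} : Finset R)ᶜ, ∑ g : Equiv.Perm (Fin Q), K g s0 v) +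
          ∑ g : Equiv.Perm (Fin Q),
            if (fun _ => b0) s0 ≠ g ((fun _ => b0) s0) then K g s0 s0 else 0) := by
      rw [← mul_assoc, inv_mul_cancel₀ (hpi s0).ne', one_mul]
    rw [Finset.sum_singleton, hfin]
    linarith
  · push_neg at hθbig
    by_contra hcon
    push_neg at hcon
    -- cut form of the contradiction hypothesis
    have hbeta : ∀ S : Finset R, S.Nonempty → ∀ ℓ : R → Fin Q,
        θ * (∑ u ∈ S, piR u) ≤ ∑ u ∈ S, piR u *
          ((∑ v ∈ Sᶜ, ∑ g : Equiv.Perm (Fin Q), K g u v) +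
            ∑ v ∈ S, ∑ g : Equiv.Perm (Fin Q), if ℓ v ≠ g (ℓ u) then K g u v else 0) := by
      intro S hS ℓ
      have h1 := hcon S hS ℓ
      unfold betaTr at h1
      have hpos : 0 < ∑ u ∈ S, piR u := Finset.sum_pos (fun u _ => hpi u) hS
      have h2 := mul_le_mul_of_nonneg_right h1 hpos.le
      have h3 : ((∑ u ∈ S, piR u)⁻¹ * (∑ u ∈ S, piR u *
            ((∑ v ∈ Sᶜ, ∑ g : Equiv.Perm (Fin Q), K g u v) +
              ∑ v ∈ S, ∑ g : Equiv.Perm (Fin Q), if ℓ v ≠ g (ℓ u) then K g u v else 0)))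
            * (∑ u ∈ S, piR u)
          = ∑ u ∈ S, piR u *
            ((∑ v ∈ Sᶜ, ∑ g : Equiv.Perm (Fin Q), K g u v) +
              ∑ v ∈ S, ∑ g : Equiv.Perm (Fin Q), if ℓ v ≠ g (ℓ u) then K g u v else 0) := by
        rw [mul_comm, ← mul_assoc, mul_inv_cancel₀ hpos.ne', one_mul]
      rw [h3] at h2
      exact h2
    -- pick a heavy starting point in B
    have hBne : B.Nonempty := by
      by_contra hB0
      rw [Finset.not_nonempty_iff_eq_empty] at hB0
      rw [hB0, Finset.sum_empty] at hB
      exact lt_irrefl 0 hB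
    obtain ⟨s, hsB, hsmax⟩ := B.exists_max_image piR hBne
    have hπs : (∑ u ∈ B, piR u) ≤ (Fintype.card R : ℝ) * piR s := by
      calc (∑ u ∈ B, piR u) ≤ ∑ _u ∈ B, piR s :=
            Finset.sum_le_sum fun u hu => hsmax u hu
        _ = (B.card : ℝ) * piR s := by rw [Finset.sum_const, nsmul_eq_mul]
        _ ≤ (Fintype.card R : ℝ) * piR s := by
            apply mul_le_mul_of_nonneg_right _ (hpi s).le
            have := Finset.card_le_univ B
            rw [← Finset.card_univ] at *
            exact_mod_cast this
    obtain ⟨a, hAmball⟩ := hAmbB s hsB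
    -- the lift trajectory
    set P : ℕ → R × Fin Q → ℝ := fun t x => (liftK K ^ t) (s, a) x with hPdef
    have hliftnn : ∀ (z x : R × Fin Q), 0 ≤ liftK K z x := by
      intro z x
      show (0:ℝ) ≤ ∑ g : Equiv.Perm (Fin Q), if g z.2 = x.2 then K g z.1 x.1 else 0
      apply Finset.sum_nonneg
      intro g _
      split
      · exact hK0 g z.1 x.1
      · exact le_rfl
    have hliftrow : ∀ z : R × Fin Q, ∑ x : R × Fin Q, liftK K z x = 1 := by
      intro z
      rw [Fintype.sum_prod_type]
      have e0 : ∀ (v : R) (c : Fin Q), liftK K z (v, c)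
          = ∑ g : Equiv.Perm (Fin Q), if g z.2 = c then K g z.1 v else 0 := fun v c => rfl
      have e1 : ∀ v : R, (∑ c, liftK K z (v, c)) = ∑ g : Equiv.Perm (Fin Q), K g z.1 v := by
        intro v
        rw [Finset.sum_congr rfl (fun c (_ : c ∈ Finset.univ) => e0 v c), Finset.sum_comm]
        apply Finset.sum_congr rfl
        intro g _
        rw [Finset.sum_ite_eq Finset.univ (g z.2) (fun _ => K g z.1 v)]
        simp
      rw [Finset.sum_congr rfl (fun v (_ : v ∈ Finset.univ) => e1 v)]
      exact hrow z.1
    have hP0 : ∀ t x, 0 ≤ P t x := by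
      intro t
      induction t with
      | zero =>
        intro x
        show (0:ℝ) ≤ (1 : Matrix (R × Fin Q) (R × Fin Q) ℝ) (s, a) x
        rw [Matrix.one_apply]
        split
        · exact zero_le_one
        · exact le_rfl
      | succ t ih =>
        intro x
        show (0:ℝ) ≤ (liftK K ^ (t+1)) (s, a) x
        rw [pow_succ, Matrix.mul_apply]
        apply Finset.sum_nonneg
        intro z _
        exact mul_nonneg (ih z) (hliftnn z x)
    have hPsumx : ∀ t, ∑ x : R × Fin Q, P t x = 1 := by
      intro t
      induction t with
      | zero =>
        show (∑ x : R × Fin Q, (1 : Matrix (R × Fin Q) (R × Fin Q) ℝ) (s, a) x) = 1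
        have e0 : ∀ x : R × Fin Q, (1 : Matrix (R × Fin Q) (R × Fin Q) ℝ) (s, a) x
            = if (s, a) = x then 1 else 0 := fun x => Matrix.one_apply
        rw [Finset.sum_congr rfl (fun x (_ : x ∈ Finset.univ) => e0 x)]
        rw [Finset.sum_ite_eq Finset.univ (s, a) (fun _ => (1:ℝ))]
        simp
      | succ t ih =>
        show (∑ x : R × Fin Q, (liftK K ^ (t+1)) (s, a) x) = 1
        have e1 : ∀ x : R × Fin Q, (liftK K ^ (t+1)) (s, a) x
            = ∑ z, (liftK K ^ t) (s, a) z * liftK K z x := by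
          intro x; rw [pow_succ, Matrix.mul_apply]
        rw [Finset.sum_congr rfl (fun x (_ : x ∈ Finset.univ) => e1 x), Finset.sum_comm]
        have e2 : ∀ z : R × Fin Q, (∑ x : R × Fin Q, (liftK K ^ t) (s, a) z * liftK K z x)
            = (liftK K ^ t) (s, a) z := by
          intro z
          rw [← Finset.mul_sum, hliftrow z, mul_one]
        rw [Finset.sum_congr rfl (fun z (_ : z ∈ Finset.univ) => e2 z)]
        exact ih
    have hPsum : ∀ t, ∑ v, ∑ b, P t (v, b) = 1 := by
      intro t
      have := hPsumx t
      rw [Fintype.sum_prod_type] at this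
      exact this
    have hPrec : ∀ (t : ℕ) (v : R) (c : Fin Q), P (t+1) (v, c)
        = ∑ w, ∑ b, P t (w, b) *
            (∑ g : Equiv.Perm (Fin Q), if g b = c then K g w v else 0) := by
      intro t v c
      show (liftK K ^ (t+1)) (s, a) (v, c) = _
      rw [pow_succ, Matrix.mul_apply, Fintype.sum_prod_type]
      apply Finset.sum_congr rfl
      intro w _
      apply Finset.sum_congr rfl
      intro b _
      rfl
    -- entropy along the trajectory
    set Ent : ℕ → ℝ := fun t => ∑ v, piR v * ((∑ b, P t (v, b)) / piR v *
      Real.log ((∑ b, P t (v, b)) / piR v)) with hEntdef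
    have hstep : ∀ t, t < k → θ^2/24 ≤ Ent t - Ent (t+1) := by
      intro t ht
      have hA1 : AmbT K s a t ≤ ω := hAmball t ht.le
      have hA2 : AmbT K s a (t+1) ≤ ω := hAmball (t+1) ht
      unfold AmbT at hA1 hA2
      exact aux_step hQ piR K θ ω hpi hK0 hrow hrev hlazy hθpos hθbig
        (by linarith : ω ≤ θ/10)
        (fun v b => P t (v, b)) (fun v b => P (t+1) (v, b))
        (fun v b => hP0 t (v, b)) (hPsum t) (hPrec t) hA1 hA2 hbeta
    have htel : (k : ℝ) * (θ^2/24) ≤ Ent 0 - Ent k := by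
      have h1 : ∑ t ∈ Finset.range k, (Ent t - Ent (t+1)) = Ent 0 - Ent k :=
        Finset.sum_range_sub' Ent k
      have h2 : (k : ℝ) * (θ^2/24) = ∑ _t ∈ Finset.range k, θ^2/24 := by
        rw [Finset.sum_const, Finset.card_range, nsmul_eq_mul]
      rw [h2, ← h1]
      exact Finset.sum_le_sum fun t ht => hstep t (Finset.mem_range.mp ht)
    have hEntk : 0 ≤ Ent k := by
      have per : ∀ v, (∑ b, P k (v, b)) - piR v
          ≤ piR v * ((∑ b, P k (v, b)) / piR v * Real.log ((∑ b, P k (v, b)) / piR v)) := by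
        intro v
        have hx : 0 ≤ (∑ b, P k (v, b)) / piR v :=
          div_nonneg (Finset.sum_nonneg fun b _ => hP0 k (v, b)) (hpi v).le
        have := aux_mul_log _ hx
        have h5 := mul_le_mul_of_nonneg_left this (hpi v).le
        have h6 : piR v * ((∑ b, P k (v, b)) / piR v - 1) = (∑ b, P k (v, b)) - piR v := by
          rw [mul_sub, mul_one, mul_comm, div_mul_cancel₀ _ (hpi v).ne']
        linarith
      have h7 : (∑ v, ((∑ b, P k (v, b)) - piR v)) = 0 := by
        rw [Finset.sum_sub_distrib, hPsum k, hsum]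
        ring
      calc (0:ℝ) = ∑ v, ((∑ b, P k (v, b)) - piR v) := h7.symm
        _ ≤ Ent k := Finset.sum_le_sum fun v _ => per v
    have hu0val : ∀ v, (∑ b, P 0 (v, b)) = if v = s then 1 else 0 := by
      intro v
      have e0 : ∀ b, P 0 (v, b) = if (s, a) = (v, b) then 1 else 0 := by
        intro b
        show (1 : Matrix (R × Fin Q) (R × Fin Q) ℝ) (s, a) (v, b) = _
        rw [Matrix.one_apply]
      rw [Finset.sum_congr rfl (fun b (_ : b ∈ Finset.univ) => e0 b)]
      by_cases hv : v = s
      · rw [if_pos hv]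
        have e2 : ∀ b : Fin Q, (if (s, a) = (v, b) then (1:ℝ) else 0)
            = (if a = b then (1:ℝ) else 0) := by
          intro b
          by_cases hab : a = b
          · rw [if_pos (by rw [hv, hab]), if_pos hab]
          · rw [if_neg (fun hc => hab (congrArg Prod.snd hc)), if_neg hab]
        rw [Finset.sum_congr rfl (fun b (_ : b ∈ Finset.univ) => e2 b)]
        rw [Finset.sum_ite_eq Finset.univ a (fun _ => (1:ℝ))]
        simp
      · rw [if_neg hv]
        apply Finset.sum_eq_zero
        intro b _
        rw [if_neg]
        intro hc
        exact hv (congrArg Prod.fst hc).symm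
    have hEnt0 : Ent 0 = Real.log (1 / piR s) := by
      have hterm : ∀ v, piR v * ((∑ b, P 0 (v, b)) / piR v *
            Real.log ((∑ b, P 0 (v, b)) / piR v))
          = if v = s then Real.log (1 / piR s) else 0 := by
        intro v
        rw [hu0val v]
        by_cases hv : v = s
        · rw [if_pos hv, if_pos hv, hv]
          rw [← mul_assoc, mul_one_div, div_self (hpi s).ne', one_mul]
        · rw [if_neg hv, if_neg hv]
          simp
      show (∑ v, piR v * ((∑ b, P 0 (v, b)) / piR v *
          Real.log ((∑ b, P 0 (v, b)) / piR v))) = _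
      rw [Finset.sum_congr rfl (fun v (_ : v ∈ Finset.univ) => hterm v)]
      rw [Finset.sum_ite_eq' Finset.univ s (fun _ => Real.log (1/piR s))]
      simp
    -- numeric contradiction
    have hcR1 : (1:ℝ) ≤ (Fintype.card R : ℝ) := by
      have h0 : 0 < Fintype.card R := Fintype.card_pos
      exact_mod_cast h0
    have hδ1 : (∑ u ∈ B, piR u) ≤ 1 := by
      rw [← hsum]
      apply Finset.sum_le_sum_of_subset_of_nonneg (Finset.subset_univ B)
      intro u _ _
      exact (hpi u).le
    have hxval : (1:ℝ) < 2 * (Fintype.card R : ℝ) / (∑ u ∈ B, piR u) := by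
      calc (1:ℝ) < 2 := one_lt_two
        _ ≤ 2 * (Fintype.card R : ℝ) / (∑ u ∈ B, piR u) := by
          rw [le_div_iff₀ hB]
          nlinarith
    have hLpos : 0 < Real.log (2 * (Fintype.card R : ℝ) / (∑ u ∈ B, piR u)) :=
      Real.log_pos hxval
    have hlogs : Real.log (1 / piR s)
        ≤ Real.log (2 * (Fintype.card R : ℝ) / (∑ u ∈ B, piR u)) - Real.log 2 := by
      have h1 : (1:ℝ)/piR s ≤ (Fintype.card R : ℝ) / (∑ u ∈ B, piR u) := by
        rw [div_le_div_iff₀ (hpi s) hB]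
        nlinarith [hπs]
      have h2 : Real.log ((1:ℝ)/piR s)
          ≤ Real.log ((Fintype.card R : ℝ) / (∑ u ∈ B, piR u)) :=
        Real.log_le_log (div_pos one_pos (hpi s)) h1
      have h3 : Real.log (2 * (Fintype.card R : ℝ) / (∑ u ∈ B, piR u))
          = Real.log 2 + Real.log ((Fintype.card R : ℝ) / (∑ u ∈ B, piR u)) := by
        rw [show 2 * (Fintype.card R : ℝ) / (∑ u ∈ B, piR u)
            = 2 * ((Fintype.card R : ℝ) / (∑ u ∈ B, piR u)) by ring]
        rw [Real.log_mul two_ne_zero (ne_of_gt (div_pos (by linarith) hB))]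
      linarith
    have hθ2 : (0:ℝ) < θ^2 := by positivity
    have hk2 : 25 * Real.log (2 * (Fintype.card R : ℝ) / (∑ u ∈ B, piR u)) ≤ (k:ℝ) * θ^2 := by
      have h4 : 25 / θ^2 * Real.log (2 * (Fintype.card R : ℝ) / (∑ u ∈ B, piR u)) * θ^2
          ≤ (k:ℝ) * θ^2 :=
        mul_le_mul_of_nonneg_right hklog hθ2.le
      have h5 : 25 / θ^2 * Real.log (2 * (Fintype.card R : ℝ) / (∑ u ∈ B, piR u)) * θ^2
          = 25 * Real.log (2 * (Fintype.card R : ℝ) / (∑ u ∈ B, piR u)) := by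
        field_simp
      linarith
    have hlog2 : (0:ℝ) < Real.log 2 := Real.log_pos one_lt_two
    have hfin2 : (k:ℝ) * (θ^2/24)
        ≤ Real.log (2 * (Fintype.card R : ℝ) / (∑ u ∈ B, piR u)) - Real.log 2 := by
      calc (k:ℝ)*(θ^2/24) ≤ Ent 0 - Ent k := htel
        _ ≤ Ent 0 := by linarith [hEntk]
        _ = Real.log (1/piR s) := hEnt0
        _ ≤ _ := hlogs
    nlinarith [hLpos, hlog2, hk2, hfin2]

end
end

section
/- Let 𝒰 be a Unique Games instance over alphabet [Q] on a finite multigraph G=(V,E) with no isolated vertices, let R⊆V be nonempty, and set π_R(v)=deg(v)/vol(R) for v∈R. Let (K^Π) be nonnegative kernels on R, indexed by permutations Π of [Q], with Σ_{v∈R}Σ_Π K^Π(u,v)=1 for every u∈R, and suppose that for all u,v∈R and every permutation Π, K^Π(u,v) ≥ (1/(2·deg(u)))·(number of edge copies with endpoints u,v whose constraint oriented from u to v equals Π). If there exist a nonempty S⊆R and ℓ:S→[Q] with β_R(S,ℓ) < η/4, then S is η-UG-peelable in R. -/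
open scoped Classical

noncomputable section

/-- Degree of a vertex in a finite multigraph given by endpoint maps (with multiplicity). -/
def mdeg {V E : Type} [Fintype E] [DecidableEq V] (fste snde : E → V) (v : V) : ℕ :=
  (Finset.univ.filter (fun e => fste e = v)).card +
    (Finset.univ.filter (fun e => snde e = v)).card

/-- Volume of a vertex set: `vol(S) = Σ_{v∈S} deg(v)`. -/
def mvol {V E : Type} [Fintype E] [DecidableEq V] (fste snde : E → V) (S : Finset V) : ℕ :=
  ∑ v ∈ S, mdeg fste snde v

/-- Number of edge copies with endpoints `u, v` whose constraint oriented from `u` to `v`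
equals `g` (constraints are stored oriented from `fste` to `snde`). -/
def cEdges {V E : Type} [Fintype E] [DecidableEq V] {Q : ℕ}
    (fste snde : E → V) (perm : E → Equiv.Perm (Fin Q))
    (u v : V) (g : Equiv.Perm (Fin Q)) : ℕ :=
  (Finset.univ.filter (fun e =>
    (fste e = u ∧ snde e = v ∧ perm e = g) ∨
    (fste e = v ∧ snde e = u ∧ (perm e)⁻¹ = g))).card

/-- `β_R(S,ℓ)` for kernels `(K^Π)` on `R`, with `π_R(v) = deg(v)/vol(R)`. -/
def betaR {V E : Type} [Fintype V] [Fintype E] [DecidableEq V] {Q : ℕ}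
    (fste snde : E → V) (K : Equiv.Perm (Fin Q) → V → V → ℝ)
    (R S : Finset V) (ℓ : V → Fin Q) : ℝ :=
  (∑ u ∈ S, ((mdeg fste snde u : ℝ) / (mvol fste snde R : ℝ)))⁻¹ *
    ∑ u ∈ S, ((mdeg fste snde u : ℝ) / (mvol fste snde R : ℝ)) *
      ((∑ v ∈ R \ S, ∑ g : Equiv.Perm (Fin Q), K g u v) +
        ∑ v ∈ S, ∑ g : Equiv.Perm (Fin Q), if ℓ v ≠ g (ℓ u) then K g u v else 0)

/-- Number of edge copies internal to `S` violated by `ℓ`. -/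
def badIn {V E : Type} [Fintype E] [DecidableEq V] {Q : ℕ}
    (fste snde : E → V) (perm : E → Equiv.Perm (Fin Q)) (S : Finset V) (ℓ : V → Fin Q) : ℕ :=
  (Finset.univ.filter (fun e =>
    fste e ∈ S ∧ snde e ∈ S ∧ ℓ (snde e) ≠ perm e (ℓ (fste e)))).card

/-- Number of edge copies with one endpoint in `S` and the other in `R \ S`. -/
def bdry {V E : Type} [Fintype E] [DecidableEq V] (fste snde : E → V) (S R : Finset V) : ℕ :=
  (Finset.univ.filter (fun e =>
    (fste e ∈ S ∧ snde e ∈ R \ S) ∨ (snde e ∈ S ∧ fste e ∈ R \ S))).card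

/-! Each edge copy leaving `S`, or inside `S` and violated by `ℓ`, is counted by some
`cEdges u v g` with `u ∈ S` that enters the failure mass of one trace step from `u`, and the
kernel domination bounds `cEdges u v g` by `2 deg(u) K^g(u,v)`. Summing over `u ∈ S` with
weights `deg(u)` gives `badIn + bdry ≤ 2 β_R(S,ℓ) vol(S) ≤ η vol(S) / 2`, so `ℓ` itself
witnesses peelability. -/

lemma Finset.card_filter_le_sum_card_filter {α ι : Type*} (s : Finset α) (I : Finset ι)
    (p : α → Prop) [DecidablePred p] (q : ι → α → Prop) [∀ i, DecidablePred (q i)]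
    (h : ∀ a ∈ s, p a → ∃ i ∈ I, q i a) :
    (s.filter p).card ≤ ∑ i ∈ I, (s.filter (q i)).card := by
  classical
  calc (s.filter p).card ≤ (I.biUnion fun i => s.filter (q i)).card := by
        refine Finset.card_le_card fun a ha => ?_
        obtain ⟨ha, hpa⟩ := Finset.mem_filter.mp ha
        obtain ⟨i, hi, hqa⟩ := h a ha hpa
        exact Finset.mem_biUnion.mpr ⟨i, hi, Finset.mem_filter.mpr ⟨ha, hqa⟩⟩
    _ ≤ _ := Finset.card_biUnion_le

section Counting

variable {V E : Type} [Fintype E] [DecidableEq V] {Q : ℕ}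
variable (fste snde : E → V) (perm : E → Equiv.Perm (Fin Q))

def failProb (K : Equiv.Perm (Fin Q) → V → V → ℝ) (R S : Finset V) (ℓ : V → Fin Q)
    (u : V) : ℝ :=
  (∑ v ∈ R \ S, ∑ g : Equiv.Perm (Fin Q), K g u v) +
    ∑ v ∈ S, ∑ g : Equiv.Perm (Fin Q), if ℓ v ≠ g (ℓ u) then K g u v else 0

lemma cEdges_le_mdeg (u v : V) (g : Equiv.Perm (Fin Q)) :
    cEdges fste snde perm u v g ≤ mdeg fste snde u := by
  unfold cEdges mdeg
  refine (Finset.card_le_card fun e he => ?_).trans (Finset.card_union_le _ _)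
  simp only [Finset.mem_filter, Finset.mem_univ, true_and, Finset.mem_union] at he ⊢
  rcases he with ⟨hu, -⟩ | ⟨-, hu, -⟩
  exacts [Or.inl hu, Or.inr hu]

lemma cEdges_le_two_mul_mdeg_mul {u v : V} {g : Equiv.Perm (Fin Q)} {k : ℝ}
    (hk : (cEdges fste snde perm u v g : ℝ) / (2 * (mdeg fste snde u : ℝ)) ≤ k) :
    (cEdges fste snde perm u v g : ℝ) ≤ 2 * mdeg fste snde u * k := by
  rcases Nat.eq_zero_or_pos (mdeg fste snde u) with hu | hu
  · have := cEdges_le_mdeg fste snde perm u v g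
    simp_all
  · rwa [div_le_iff₀' (by positivity)] at hk

lemma bdry_le_sum_cEdges (S R : Finset V) :
    bdry fste snde S R ≤
      ∑ u ∈ S, ∑ v ∈ R \ S, ∑ g : Equiv.Perm (Fin Q), cEdges fste snde perm u v g := by
  simp only [← Finset.sum_product']
  refine Finset.card_filter_le_sum_card_filter _ _ _ _ fun e _ he => ?_
  rcases he with ⟨hu, hv⟩ | ⟨hu, hv⟩
  · exact ⟨(fste e, snde e, perm e), by simp [hu, hv]⟩
  · exact ⟨(snde e, fste e, (perm e)⁻¹), by simp [hu, hv]⟩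

lemma badIn_le_sum_cEdges (S : Finset V) (ℓ : V → Fin Q) :
    badIn fste snde perm S ℓ ≤
      ∑ u ∈ S, ∑ v ∈ S, ∑ g : Equiv.Perm (Fin Q),
        if ℓ v ≠ g (ℓ u) then cEdges fste snde perm u v g else 0 := by
  simp only [← Finset.sum_product']
  rw [← Finset.sum_filter]
  refine Finset.card_filter_le_sum_card_filter _ _ _ _ fun e _ ⟨hu, hv, hbad⟩ =>
    ⟨(fste e, snde e, perm e), by simp [hu, hv, hbad]⟩

lemma badIn_add_bdry_le (K : Equiv.Perm (Fin Q) → V → V → ℝ) (R S : Finset V)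
    (hSR : S ⊆ R) (ℓ : V → Fin Q)
    (hKlb : ∀ u ∈ R, ∀ v ∈ R, ∀ g : Equiv.Perm (Fin Q),
      (cEdges fste snde perm u v g : ℝ) / (2 * (mdeg fste snde u : ℝ)) ≤ K g u v) :
    (badIn fste snde perm S ℓ : ℝ) + bdry fste snde S R ≤
      2 * ∑ u ∈ S, (mdeg fste snde u : ℝ) * failProb K R S ℓ u := by
  have hbad := badIn_le_sum_cEdges fste snde perm S ℓ
  have hbdry := bdry_le_sum_cEdges fste snde perm S R
  refine (add_le_add (Nat.cast_le.mpr hbad) (Nat.cast_le.mpr hbdry)).trans ?_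
  simp only [Finset.mul_sum, ← Finset.sum_add_distrib, failProb, mul_add, Nat.cast_sum,
    Nat.cast_ite, Nat.cast_zero, mul_ite, mul_zero, ← mul_assoc]
  refine Finset.sum_le_sum fun u hu => ?_
  rw [add_comm]
  gcongr with v hv g _ v hv g _
  · exact cEdges_le_two_mul_mdeg_mul fste snde perm
      (hKlb u (hSR hu) v (Finset.mem_sdiff.mp hv).1 g)
  · split_ifs
    · exact cEdges_le_two_mul_mdeg_mul fste snde perm (hKlb u (hSR hu) v (hSR hv) g)
    · rfl

end Counting

lemma betaR_mul_mvol {V E : Type} [Fintype V] [Fintype E] [DecidableEq V] {Q : ℕ}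
    (fste snde : E → V) (K : Equiv.Perm (Fin Q) → V → V → ℝ) {R S : Finset V}
    (hSR : S ⊆ R) (ℓ : V → Fin Q) :
    betaR fste snde K R S ℓ * mvol fste snde S =
      ∑ u ∈ S, (mdeg fste snde u : ℝ) * failProb K R S ℓ u := by
  have hvolS : (mvol fste snde S : ℝ) = ∑ u ∈ S, (mdeg fste snde u : ℝ) := by
    simp [mvol]
  rcases eq_or_ne (mvol fste snde S) 0 with hS | hS
  -- here `β_R(S,ℓ)` is the junk value `0⁻¹ * 0`, and every `deg(u)`, `u ∈ S`, vanishes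
  · have hdeg := Finset.sum_eq_zero_iff.mp hS
    simp only [hS, Nat.cast_zero, mul_zero]
    exact (Finset.sum_eq_zero fun u hu => by simp [hdeg u hu]).symm
  · have hR : (mvol fste snde R : ℝ) ≠ 0 := by
      have : mvol fste snde S ≤ mvol fste snde R := Finset.sum_le_sum_of_subset hSR
      exact Nat.cast_ne_zero.mpr (by omega)
    unfold betaR
    rw [← Finset.sum_div, ← hvolS]
    simp only [div_mul_eq_mul_div, ← Finset.sum_div]
    field_simp
    rfl

theorem stmt7_general (Q : ℕ) (V E : Type) [Fintype V] [Fintype E] [DecidableEq V]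
    (fste snde : E → V)
    (perm : E → Equiv.Perm (Fin Q))
    (R : Finset V)
    (K : Equiv.Perm (Fin Q) → V → V → ℝ)
    (hKlb : ∀ u ∈ R, ∀ v ∈ R, ∀ g : Equiv.Perm (Fin Q),
      (cEdges fste snde perm u v g : ℝ) / (2 * (mdeg fste snde u : ℝ)) ≤ K g u v)
    (η : ℝ) (S : Finset V) (hSR : S ⊆ R)
    (ℓ : V → Fin Q)
    (hβ : betaR fste snde K R S ℓ < η / 4) :
    ∃ ℓ' : V → Fin Q,
      ((badIn fste snde perm S ℓ' : ℝ) + (bdry fste snde S R : ℝ))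
        ≤ η * (mvol fste snde S : ℝ) := by
  refine ⟨ℓ, ?_⟩
  have hcount := badIn_add_bdry_le fste snde perm K R S hSR ℓ hKlb
  rw [← betaR_mul_mvol fste snde K hSR ℓ] at hcount
  have hβvol := mul_le_mul_of_nonneg_right hβ.le (Nat.cast_nonneg (mvol fste snde S))
  have hcount_nonneg : (0 : ℝ) ≤ badIn fste snde perm S ℓ + bdry fste snde S R := by positivity
  linarith

/-- Low failure probability for one trace step implies UG-peelability: if `β_R(S,ℓ) < η/4`
for kernels dominating the one-step walk transitions inside `R`, then `S` is
`η`-UG-peelable in `R`. -/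
theorem stmt7 (Q : ℕ) (V E : Type) [Fintype V] [Fintype E] [DecidableEq V]
    (fste snde : E → V) (hne : ∀ e, fste e ≠ snde e)
    (perm : E → Equiv.Perm (Fin Q))
    (R : Finset V) (hR : R.Nonempty)
    (K : Equiv.Perm (Fin Q) → V → V → ℝ)
    (hK0 : ∀ g u v, 0 ≤ K g u v)
    (hK1 : ∀ u ∈ R, ∑ v ∈ R, ∑ g : Equiv.Perm (Fin Q), K g u v = 1)
    (hKlb : ∀ u ∈ R, ∀ v ∈ R, ∀ g : Equiv.Perm (Fin Q),
      (cEdges fste snde perm u v g : ℝ) / (2 * (mdeg fste snde u : ℝ)) ≤ K g u v)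
    (η : ℝ) (S : Finset V) (hS : S.Nonempty) (hSR : S ⊆ R)
    (ℓ : V → Fin Q)
    (hβ : betaR fste snde K R S ℓ < η / 4) :
    ∃ ℓ' : V → Fin Q,
      ((badIn fste snde perm S ℓ' : ℝ) + (bdry fste snde S R : ℝ))
        ≤ η * (mvol fste snde S : ℝ) :=
  stmt7_general Q V E fste snde perm R K hKlb η S hSR ℓ hβ
end
end

section
/- Let 𝒰 be a Unique Games instance over alphabet [Q] on a finite multigraph G=(V,E) with m>0. Let R_0=V, and for i=1,…,N let S_i⊆R_{i−1} be nonempty and η_i-UG-peelable in R_{i−1}, with R_i=R_{i−1}∖S_i, and write R_*=R_N for the final residual. Then τ_UG(𝒰) ≤ 2·Σ_{i=1}^N η_i·π(S_i) + π(R_*). -/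
open scoped Classical

noncomputable section

/-- `τ_UG(𝒰)`: the minimum, over labelings `x : V → [Q]`, of the fraction of violated
edge copies. -/
def tauUG {V E : Type} [Fintype V] [Fintype E] [DecidableEq V] {Q : ℕ}
    (fste snde : E → V) (perm : E → Equiv.Perm (Fin Q)) : ℝ :=
  ⨅ x : V → Fin Q,
    ((Finset.univ.filter (fun e => x (snde e) ≠ perm e (x (fste e)))).card : ℝ) /
      (Fintype.card E : ℝ)

/-!
Label every vertex by the peeling witness of the first step that removes it, and the final
residual `R_*` arbitrarily. A violated edge copy with an endpoint outside `R_*` is charged to the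
first step `k` that removes one of its endpoints: both endpoints still lie in `R_k`, so the copy is
either internal to `S_k` and violated by the witness `ℓ_k`, or it joins `S_k` to `R_k ∖ S_k`.
Hence these copies number at most `Σ η_k vol(S_k)`, while the remaining violated copies lie inside
`R_*`, and there are at most `vol(R_*)/2` of those.
-/

open Finset

lemma card_le_sum_add_of_forall_mem {ι κ : Type*} [DecidableEq ι] {s : Finset κ}
    {t r : Finset ι} {a b : κ → Finset ι} (h : ∀ e ∈ t, e ∈ r ∨ ∃ k ∈ s, e ∈ a k ∨ e ∈ b k) :
    #t ≤ ∑ k ∈ s, (#(a k) + #(b k)) + #r := by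
  calc #t ≤ #(s.biUnion (fun k => a k ∪ b k) ∪ r) :=
        card_le_card fun e he => by simpa [or_comm] using h e he
    _ ≤ _ := (card_union_le _ _).trans <| Nat.add_le_add_right
        (card_biUnion_le.trans <| sum_le_sum fun k _ => card_union_le _ _) _

section Multigraph

variable {V E : Type} [Fintype E] [DecidableEq V] (fste snde : E → V)

lemma mvol_eq_card_filter_add (R : Finset V) :
    mvol fste snde R = #{e | fste e ∈ R} + #{e | snde e ∈ R} := by
  simp only [mvol, mdeg, sum_add_distrib, sum_card_fiberwise_eq_card_filter]

lemma two_mul_card_internal_le_mvol (R : Finset V) :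
    2 * #{e | fste e ∈ R ∧ snde e ∈ R} ≤ mvol fste snde R := by
  rw [mvol_eq_card_filter_add, two_mul]
  gcongr with e <;> simp_all

lemma tauUG_le_card_violated_div [Fintype V] {Q : ℕ} (perm : E → Equiv.Perm (Fin Q))
    (x : V → Fin Q) :
    tauUG fste snde perm ≤
      (#{e | x (snde e) ≠ perm e (x (fste e))} : ℝ) / Fintype.card E :=
  ciInf_le ⟨0, by rintro _ ⟨y, rfl⟩; positivity⟩ x

end Multigraph

section Peeling

variable {V α : Type} [DecidableEq V] (N : ℕ) (S Rres : ℕ → Finset V)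

lemma mem_residual_iff_forall_notMem [Fintype V] (hR0 : Rres 0 = univ)
    (hRstep : ∀ i < N, Rres (i + 1) = Rres i \ S i) {k : ℕ} (hk : k ≤ N) (v : V) :
    v ∈ Rres k ↔ ∀ i < k, v ∉ S i := by
  induction k with
  | zero => simp [hR0]
  | succ k ih =>
    rw [hRstep k hk, mem_sdiff, ih (by omega), Nat.forall_lt_succ_right]

def peelLabeling (L : ℕ → V → α) (x₀ : V → α) (v : V) : α :=
  if h : ∃ i < N, v ∈ S i then L (Nat.find h) v else x₀ v

variable {N S}

lemma peelLabeling_eq (L : ℕ → V → α) (x₀ : V → α) {k : ℕ} (hk : k < N) {v : V}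
    (hv : v ∈ S k) (hfirst : ∀ i < k, v ∉ S i) : peelLabeling N S L x₀ v = L k v := by
  have h : ∃ i < N, v ∈ S i := ⟨k, hk, hv⟩
  rw [peelLabeling, dif_pos h,
    (Nat.find_eq_iff h).2 ⟨⟨hk, hv⟩, fun i hi ⟨_, hvi⟩ => hfirst i hi hvi⟩]

variable [Fintype V] (hR0 : Rres 0 = univ) (hRstep : ∀ i < N, Rres (i + 1) = Rres i \ S i)
include hR0 hRstep

lemma exists_charge_of_not_internal (L : ℕ → V → α) (x₀ : V → α) (C : α → α → Prop)
    {u w : V} (hviol : ¬C (peelLabeling N S L x₀ u) (peelLabeling N S L x₀ w))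
    (hout : ¬(u ∈ Rres N ∧ w ∈ Rres N)) :
    ∃ k < N, (u ∈ S k ∧ w ∈ S k ∧ ¬C (L k u) (L k w)) ∨
      (u ∈ S k ∧ w ∈ Rres k \ S k) ∨ (w ∈ S k ∧ u ∈ Rres k \ S k) := by
  have hex : ∃ k < N, u ∈ S k ∨ w ∈ S k := by
    simp only [mem_residual_iff_forall_notMem N S Rres hR0 hRstep le_rfl, not_and_or, not_forall,
      not_not] at hout
    rcases hout with ⟨k, hk, hu⟩ | ⟨k, hk, hw⟩
    exacts [⟨k, hk, .inl hu⟩, ⟨k, hk, .inr hw⟩]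
  obtain ⟨hkN, hk⟩ := Nat.find_spec hex
  set k := Nat.find hex
  have hearlier : ∀ i < k, u ∉ S i ∧ w ∉ S i := fun i hi => by
    simpa [not_or, hi.trans hkN] using Nat.find_min hex hi
  have hres : ∀ v, (∀ i < k, v ∉ S i) → v ∈ Rres k := fun v =>
    (mem_residual_iff_forall_notMem N S Rres hR0 hRstep hkN.le v).2
  have hu := hres u fun i hi => (hearlier i hi).1
  have hw := hres w fun i hi => (hearlier i hi).2
  refine ⟨k, hkN, ?_⟩
  by_cases hu' : u ∈ S k <;> by_cases hw' : w ∈ S k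
  · rw [peelLabeling_eq L x₀ hkN hu' fun i hi => (hearlier i hi).1,
      peelLabeling_eq L x₀ hkN hw' fun i hi => (hearlier i hi).2] at hviol
    exact .inl ⟨hu', hw', hviol⟩
  all_goals simp_all

lemma card_violated_peelLabeling_le {E : Type} [Fintype E] {Q : ℕ} (fste snde : E → V)
    (perm : E → Equiv.Perm (Fin Q)) (L : ℕ → V → Fin Q) (x₀ : V → Fin Q) :
    #{e | peelLabeling N S L x₀ (snde e) ≠ perm e (peelLabeling N S L x₀ (fste e))} ≤
      ∑ k ∈ range N, (badIn fste snde perm (S k) (L k) + bdry fste snde (S k) (Rres k)) +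
        #{e | fste e ∈ Rres N ∧ snde e ∈ Rres N} := by
  refine card_le_sum_add_of_forall_mem fun e he => ?_
  rw [mem_filter_univ] at he
  by_cases hin : fste e ∈ Rres N ∧ snde e ∈ Rres N
  · exact .inl ((mem_filter_univ e).2 hin)
  · obtain ⟨k, hk, hcharge⟩ :=
      exists_charge_of_not_internal Rres hR0 hRstep L x₀ (fun a b => b = perm e a) he hin
    exact .inr ⟨k, mem_range.2 hk, by simpa only [mem_filter_univ] using hcharge⟩

end Peeling

theorem stmt8_general (Q : ℕ) (V E : Type) [Fintype V] [Fintype E] [DecidableEq V]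
    (fste snde : E → V)
    (perm : E → Equiv.Perm (Fin Q))
    (N : ℕ) (S : ℕ → Finset V) (η : ℕ → ℝ) (Rres : ℕ → Finset V)
    (hR0 : Rres 0 = Finset.univ)
    (hRstep : ∀ i < N, Rres (i + 1) = Rres i \ S i)
    (hpeel : ∀ i < N, ∃ ℓ : V → Fin Q,
      ((badIn fste snde perm (S i) ℓ : ℝ) + (bdry fste snde (S i) (Rres i) : ℝ))
        ≤ η i * (mvol fste snde (S i) : ℝ)) :
    tauUG fste snde perm ≤
      2 * (∑ i ∈ Finset.range N,
            η i * ((mvol fste snde (S i) : ℝ) / (2 * (Fintype.card E : ℝ))))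
        + (mvol fste snde (Rres N) : ℝ) / (2 * (Fintype.card E : ℝ)) := by
  rcases isEmpty_or_nonempty (V → Fin Q) with hQ | hQ
  · obtain rfl : N = 0 := Nat.eq_zero_of_not_pos fun hN => hQ.false (hpeel 0 hN).choose
    simp only [tauUG, Real.iInf_of_isEmpty, range_zero, sum_empty, mul_zero, zero_add]
    positivity
  choose! L hL using hpeel
  let x₀ : V → Fin Q := hQ.some
  have hcount := (Nat.cast_le (α := ℝ)).2 <|
    card_violated_peelLabeling_le Rres hR0 hRstep fste snde perm L x₀
  have hint := (Nat.cast_le (α := ℝ)).2 <| two_mul_card_internal_le_mvol fste snde (Rres N)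
  have hbound : (#{e | peelLabeling N S L x₀ (snde e) ≠ perm e (peelLabeling N S L x₀ (fste e))}
      : ℝ) ≤ ∑ k ∈ range N, η k * mvol fste snde (S k) + mvol fste snde (Rres N) / 2 := by
    have hsum := sum_le_sum fun k hk => hL k (mem_range.1 hk)
    push_cast at hcount hint hsum ⊢
    linarith
  calc tauUG fste snde perm ≤ _ := tauUG_le_card_violated_div fste snde perm _
    _ ≤ _ := div_le_div_of_nonneg_right hbound (Nat.cast_nonneg _)
    _ = _ := by
      rw [add_div, sum_div, mul_sum, div_div]
      exact congrArg (· + _) (sum_congr rfl fun k _ => by ring)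

/-- Nonuniform UG peeling: if disjoint sets `S i` are successively `η i`-UG-peelable in the
residuals `Rres i` (with `Rres 0 = V`, `Rres (i+1) = Rres i \ S i`), then
`τ_UG(𝒰) ≤ 2 Σ_i η_i π(S_i) + π(R_*)`, where `π(S) = vol(S)/(2m)`. -/
theorem stmt8 (Q : ℕ) (V E : Type) [Fintype V] [Fintype E] [DecidableEq V]
    (fste snde : E → V) (hne : ∀ e, fste e ≠ snde e) (hm : 0 < Fintype.card E)
    (perm : E → Equiv.Perm (Fin Q))
    (N : ℕ) (S : ℕ → Finset V) (η : ℕ → ℝ) (Rres : ℕ → Finset V)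
    (hR0 : Rres 0 = Finset.univ)
    (hRstep : ∀ i < N, Rres (i + 1) = Rres i \ S i)
    (hSsub : ∀ i < N, S i ⊆ Rres i)
    (hSne : ∀ i < N, (S i).Nonempty)
    (hpeel : ∀ i < N, ∃ ℓ : V → Fin Q,
      ((badIn fste snde perm (S i) ℓ : ℝ) + (bdry fste snde (S i) (Rres i) : ℝ))
        ≤ η i * (mvol fste snde (S i) : ℝ)) :
    tauUG fste snde perm ≤
      2 * (∑ i ∈ Finset.range N,
            η i * ((mvol fste snde (S i) : ℝ) / (2 * (Fintype.card E : ℝ))))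
        + (mvol fste snde (Rres N) : ℝ) / (2 * (Fintype.card E : ℝ)) :=
  stmt8_general Q V E fste snde perm N S η Rres hR0 hRstep hpeel
end
end

section
/- There is an absolute constant c_Ch>0 such that the following holds. Let K=(K⁺,K⁻) be a signed reversible kernel on a finite set U with positive probability measure ν, and assume the operator B given by (Bf)(u)=Σ_v(K⁺(u,v)−K⁻(u,v))f(v) is self-adjoint on L²(ν) with spectrum contained in [0,1]. If β(K) ≥ θ for some θ>0, then ⟨f,(I−B)f⟩_ν ≥ c_Ch·θ²·‖f‖²_{2,ν} for every f:U→ℝ, and consequently ‖B^k f‖_{2,ν} ≤ (1−c_Ch·θ²)^k·‖f‖_{2,ν} for every integer k≥0. -/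
noncomputable section

/-- The `L²(ν)` inner product on a finite set: `⟨f,g⟩_ν = Σ_u ν(u) f(u) g(u)`. -/
def innerNu {U : Type} [Fintype U] (ν f g : U → ℝ) : ℝ := ∑ u, ν u * f u * g u

/-- The signed operator `(Bf)(u) = Σ_v (K⁺(u,v) − K⁻(u,v)) f(v)`. -/
def signedOp {U : Type} [Fintype U] (Kp Km : U → U → ℝ) (f : U → ℝ) : U → ℝ :=
  fun u => ∑ v, (Kp u v - Km u v) * f v

/-- The signed bipartiteness ratio `β_K^ν(S,x)` of a set `S` with a `±1`-signing `x`
(encoded by a Boolean function; the sign `σ = +` penalizes `x(v) ≠ x(u)` and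
`σ = −` penalizes `x(v) = x(u)`). -/
def betaSigned {U : Type} [Fintype U] [DecidableEq U]
    (ν : U → ℝ) (Kp Km : U → U → ℝ) (S : Finset U) (x : U → Bool) : ℝ :=
  (∑ u ∈ S, ν u)⁻¹ *
    ∑ u ∈ S, ν u *
      ((∑ v ∈ Sᶜ, (Kp u v + Km u v)) +
        ∑ v ∈ S, ((if x v ≠ x u then Kp u v else 0) + (if x v = x u then Km u v else 0)))

open Finset

/-!
Let `x` be the sign pattern of `f` and `g = f²`. Decomposing `g` into indicators of its
superlevel sets (layer cake) and applying `β ≥ θ` to each level set gives `θ ‖f‖² ≤ Φ(g)`, where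
`Φ = cutFunctional` charges `K⁺ + K⁻` across the boundary of a level set and the part of `K^σ`
violating `x` inside it. Symmetrized by reversibility, `2Φ(g)` is a sum over pairs `(u,v)`, each
bounded by `K⁺|f u - f v|(|f u| + |f v|) + K⁻|f u + f v|(|f u| + |f v|)`, and the AM-GM
inequality `θ c d ≤ c² + θ² d² / 4` bounds `θ Φ(g)` by `⟨f,(I-B)f⟩ + θ² ‖f‖² / 2`.
Hence `θ² ‖f‖² ≤ 2 ⟨f,(I-B)f⟩`, i.e. `c_Ch = 1/2`.

For the contraction, `0 ≤ B ≤ μ = 1 - θ²/2` and Cauchy–Schwarz for the positive semidefinite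
form `⟨·, B ·⟩` give `‖Bf‖⁴ = ⟨f, B(Bf)⟩² ≤ ⟨f,Bf⟩ ⟨Bf,B(Bf)⟩ ≤ μ² ‖f‖² ‖Bf‖²`.
-/

lemma abs_sub_eq_add_sub_two_mul_min (a b : ℝ) : |a - b| = a + b - 2 * min a b := by
  rw [← max_sub_min_eq_abs, min_comm, max_comm]
  linarith [min_add_max a b]

lemma min_add_max_sub_zero (a t : ℝ) : min a t + max (a - t) 0 = a := by
  rcases le_total a t with h | h
  · rw [min_eq_left h, max_eq_right (by linarith)]; ring
  · rw [min_eq_right h, max_eq_left (by linarith)]; ring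

lemma abs_sq_sub_sq_le (a b : ℝ) : |a ^ 2 - b ^ 2| ≤ |a - b| * (|a| + |b|) := by
  rw [show a ^ 2 - b ^ 2 = (a - b) * (a + b) by ring, abs_mul]
  exact mul_le_mul_of_nonneg_left (abs_add_le a b) (abs_nonneg _)

lemma sq_add_sq_le_of_mul_nonpos {a b : ℝ} (h : a * b ≤ 0) :
    a ^ 2 + b ^ 2 ≤ |a - b| * (|a| + |b|) := by
  calc a ^ 2 + b ^ 2 ≤ (a - b) ^ 2 := by nlinarith
    _ = |a - b| * |a - b| := by rw [← sq, sq_abs]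
    _ ≤ |a - b| * (|a| + |b|) := mul_le_mul_of_nonneg_left (abs_sub a b) (abs_nonneg _)

lemma mul_nonneg_of_decide_eq {a b : ℝ} (h : decide (0 ≤ b) = decide (0 ≤ a)) : 0 ≤ a * b := by
  rcases lt_or_ge a 0 with ha | ha <;> rcases lt_or_ge b 0 with hb | hb <;>
    simp_all [not_le.2] <;> nlinarith

lemma mul_nonpos_of_decide_ne {a b : ℝ} (h : decide (0 ≤ b) ≠ decide (0 ≤ a)) : a * b ≤ 0 := by
  rcases lt_or_ge a 0 with ha | ha <;> rcases lt_or_ge b 0 with hb | hb <;>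
    simp_all [not_le.2] <;> nlinarith

lemma signed_pair_le (a b kp km : ℝ) (hkp : 0 ≤ kp) (hkm : 0 ≤ km) :
    (kp + km) * |a ^ 2 - b ^ 2| +
        2 * ((if decide (0 ≤ b) ≠ decide (0 ≤ a) then kp else 0) +
          (if decide (0 ≤ b) = decide (0 ≤ a) then km else 0)) * min (a ^ 2) (b ^ 2) ≤
      (kp * |a - b| + km * |a + b|) * (|a| + |b|) := by
  have hsame : |a ^ 2 - b ^ 2| ≤ |a + b| * (|a| + |b|) := by
    simpa [abs_neg] using abs_sq_sub_sq_le a (-b)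
  have hmin := abs_sub_eq_add_sub_two_mul_min (a ^ 2) (b ^ 2)
  by_cases h : decide (0 ≤ b) = decide (0 ≤ a)
  · have hopp : a ^ 2 + b ^ 2 ≤ |a + b| * (|a| + |b|) := by
      simpa [abs_neg] using sq_add_sq_le_of_mul_nonpos (b := -b)
        (by rw [mul_neg]; exact neg_nonpos.2 (mul_nonneg_of_decide_eq h))
    simp only [h, ne_eq, not_true_eq_false, if_false, if_true, zero_add]
    linear_combination mul_le_mul_of_nonneg_left (abs_sq_sub_sq_le a b) hkp +
      mul_le_mul_of_nonneg_left hopp hkm + km * hmin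
  · have hopp := sq_add_sq_le_of_mul_nonpos (mul_nonpos_of_decide_ne h)
    simp only [h, ne_eq, not_false_eq_true, if_false, if_true, add_zero]
    linear_combination mul_le_mul_of_nonneg_left hopp hkp +
      mul_le_mul_of_nonneg_left hsame hkm + kp * hmin

lemma mul_mul_le_sq_add (θ c d : ℝ) : θ * c * d ≤ c ^ 2 + θ ^ 2 * d ^ 2 / 4 := by
  nlinarith [sq_nonneg (c - θ * d / 2)]

lemma mul_signed_pair_le {θ : ℝ} (hθ : 0 ≤ θ) (a b kp km : ℝ) (hkp : 0 ≤ kp) (hkm : 0 ≤ km) :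
    θ * ((kp + km) * |a ^ 2 - b ^ 2| +
        2 * ((if decide (0 ≤ b) ≠ decide (0 ≤ a) then kp else 0) +
          (if decide (0 ≤ b) = decide (0 ≤ a) then km else 0)) * min (a ^ 2) (b ^ 2)) ≤
      kp * (a - b) ^ 2 + km * (a + b) ^ 2 + θ ^ 2 / 2 * ((kp + km) * (a ^ 2 + b ^ 2)) := by
  have hd : (|a| + |b|) ^ 2 ≤ 2 * (a ^ 2 + b ^ 2) := by
    nlinarith [sq_nonneg (|a| - |b|), sq_abs a, sq_abs b]
  calc _ ≤ θ * ((kp * |a - b| + km * |a + b|) * (|a| + |b|)) :=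
        mul_le_mul_of_nonneg_left (signed_pair_le a b kp km hkp hkm) hθ
    _ = kp * (θ * |a - b| * (|a| + |b|)) + km * (θ * |a + b| * (|a| + |b|)) := by ring
    _ ≤ kp * ((a - b) ^ 2 + θ ^ 2 * (|a| + |b|) ^ 2 / 4) +
          km * ((a + b) ^ 2 + θ ^ 2 * (|a| + |b|) ^ 2 / 4) := by
        gcongr <;> [rw [← sq_abs (a - b)]; rw [← sq_abs (a + b)]] <;> exact mul_mul_le_sq_add _ _ _
    _ ≤ _ := by
        linear_combination θ ^ 2 / 4 * mul_le_mul_of_nonneg_left hd (add_nonneg hkp hkm)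

section CutFunctional

variable {U : Type*} [Fintype U] (Q R : U → U → ℝ)

def cutFunctional (g : U → ℝ) : ℝ :=
  ∑ u, ∑ v, (Q u v * (g u - min (g u) (g v)) + R u v * min (g u) (g v))

variable {Q R} in
lemma two_mul_cutFunctional (hQ : ∀ u v, Q u v = Q v u) (hR : ∀ u v, R u v = R v u)
    (g : U → ℝ) :
    2 * cutFunctional Q R g =
      ∑ u, ∑ v, (Q u v * |g u - g v| + 2 * R u v * min (g u) (g v)) := by
  have hswap : cutFunctional Q R g =
      ∑ u, ∑ v, (Q u v * (g v - min (g u) (g v)) + R u v * min (g u) (g v)) := by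
    rw [cutFunctional, sum_comm]
    exact sum_congr rfl fun u _ => sum_congr rfl fun v _ => by rw [hQ, hR, min_comm]
  rw [two_mul]
  nth_rw 2 [hswap]
  rw [cutFunctional, ← sum_add_distrib]
  refine sum_congr rfl fun u _ => ?_
  rw [← sum_add_distrib]
  refine sum_congr rfl fun v _ => ?_
  rw [abs_sub_eq_add_sub_two_mul_min]
  ring

lemma cutFunctional_eq_add_truncate (g : U → ℝ) (t : ℝ) :
    cutFunctional Q R g =
      cutFunctional Q R (fun u => min (g u) t) + cutFunctional Q R (fun u => max (g u - t) 0) := by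
  have hlow : Monotone fun a : ℝ => min a t := fun a b h => min_le_min_right t h
  have hhigh : Monotone fun a : ℝ => max (a - t) 0 := fun a b h => max_le_max_right 0 (by linarith)
  have hsplit (a b : ℝ) :
      min a b = min (min a t) (min b t) + min (max (a - t) 0) (max (b - t) 0) := by
    rw [← hlow.map_min, ← hhigh.map_min, min_add_max_sub_zero]
  simp only [cutFunctional, ← sum_add_distrib]
  refine sum_congr rfl fun u _ => sum_congr rfl fun v _ => ?_
  rw [hsplit (g u) (g v)]
  nth_rw 1 [← min_add_max_sub_zero (g u) t]
  ring

variable [DecidableEq U]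

lemma cutFunctional_indicator (S : Finset U) {m : ℝ} (hm : 0 ≤ m) :
    cutFunctional Q R (fun u => if u ∈ S then m else 0) =
      m * ∑ u ∈ S, (∑ v ∈ Sᶜ, Q u v + ∑ v ∈ S, R u v) := by
  have hterm (u v : U) :
      Q u v * ((if u ∈ S then m else 0) - min (if u ∈ S then m else 0) (if v ∈ S then m else 0)) +
          R u v * min (if u ∈ S then m else 0) (if v ∈ S then m else 0) =
        if u ∈ S then (if v ∈ S then m * R u v else m * Q u v) else 0 := by
    split_ifs <;> simp [hm, mul_comm]
  simp only [cutFunctional, hterm, sum_ite_irrel, sum_ite, sum_const_zero, zero_add,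
    filter_mem_eq_inter, univ_inter, filter_notMem_eq_sdiff, ← compl_eq_univ_sdiff, mul_sum,
    mul_add, add_comm]

theorem mul_sum_le_cutFunctional (w : U → ℝ) (θ : ℝ)
    (hcut : ∀ S : Finset U, S.Nonempty →
      θ * ∑ u ∈ S, w u ≤ ∑ u ∈ S, (∑ v ∈ Sᶜ, Q u v + ∑ v ∈ S, R u v))
    (g : U → ℝ) (hg : ∀ u, 0 ≤ g u) :
    θ * ∑ u, w u * g u ≤ cutFunctional Q R g := by
  induction hn : #{u | 0 < g u} using Nat.strong_induction_on generalizing g with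
  | _ n ih =>
  set S : Finset U := {u | 0 < g u}
  have hzero (u : U) (hu : u ∉ S) : g u = 0 :=
    le_antisymm (not_lt.1 fun h => hu (by simp [S, h])) (hg u)
  obtain hS | hS := S.eq_empty_or_nonempty
  · have hg0 (u : U) : g u = 0 := hzero u (by simp [hS])
    simp [hg0, cutFunctional]
  obtain ⟨u₀, hu₀, hm_eq⟩ := S.exists_mem_eq_inf' hS g
  set m := S.inf' hS g
  have hm : 0 < m := hm_eq ▸ (mem_filter.1 hu₀).2
  have hlow : (fun u => min (g u) m) = fun u => if u ∈ S then m else 0 := by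
    funext u
    by_cases hu : u ∈ S
    · simpa [hu] using S.inf'_le g hu
    · simp [hu, hzero u hu, hm.le]
  have hsmaller : #{u | 0 < max (g u - m) 0} < n := by
    rw [← hn]
    refine card_lt_card ((ssubset_iff_of_subset fun u hu => ?_).2 ⟨u₀, hu₀, ?_⟩)
    · simp only [S, mem_filter, mem_univ, true_and, lt_max_iff, lt_irrefl, or_false,
        sub_pos] at hu ⊢
      linarith
    · simp [hm_eq]
  have hsum : ∑ u, w u * g u = m * ∑ u ∈ S, w u + ∑ u, w u * max (g u - m) 0 := by
    have hweight (u : U) : w u * min (g u) m = if u ∈ S then w u * m else 0 := by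
      rw [congrFun hlow u, mul_ite, mul_zero]
    calc ∑ u, w u * g u = ∑ u, (w u * min (g u) m + w u * max (g u - m) 0) := by
          simp_rw [← mul_add, min_add_max_sub_zero]
      _ = m * ∑ u ∈ S, w u + ∑ u, w u * max (g u - m) 0 := by
          rw [sum_add_distrib, mul_sum]
          simp_rw [hweight, sum_ite_mem, univ_inter, mul_comm]
  rw [cutFunctional_eq_add_truncate Q R g m, hlow, cutFunctional_indicator Q R S hm.le, hsum,
    mul_add, mul_left_comm]
  exact add_le_add (mul_le_mul_of_nonneg_left (hcut S hS) hm.le)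
    (ih _ hsmaller _ (fun u => le_max_right _ _) rfl)

end CutFunctional

section SignedKernel

variable {U : Type} [Fintype U] {ν : U → ℝ} {Kp Km : U → U → ℝ}

lemma mul_sum_le_of_le_betaSigned [DecidableEq U] (hν : ∀ u, 0 < ν u) {S : Finset U}
    (hS : S.Nonempty) {x : U → Bool} {θ : ℝ} (h : θ ≤ betaSigned ν Kp Km S x) :
    θ * ∑ u ∈ S, ν u ≤
      ∑ u ∈ S, (∑ v ∈ Sᶜ, ν u * (Kp u v + Km u v) +
        ∑ v ∈ S,
          ν u * ((if x v ≠ x u then Kp u v else 0) + (if x v = x u then Km u v else 0))) := by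
  rw [betaSigned, le_inv_mul_iff₀ (sum_pos (fun u _ => hν u) hS)] at h
  rw [mul_comm]
  simpa only [mul_add, mul_sum] using h

lemma innerNu_signedOp (f g : U → ℝ) :
    innerNu ν f (signedOp Kp Km g) = ∑ u, ∑ v, ν u * (Kp u v - Km u v) * f u * g v := by
  simp only [innerNu, signedOp, mul_sum]
  exact sum_congr rfl fun u _ => sum_congr rfl fun v _ => by ring

variable (hrow : ∀ u, ∑ v, (Kp u v + Km u v) = 1)
  (hrevp : ∀ u v, ν u * Kp u v = ν v * Kp v u) (hrevm : ∀ u v, ν u * Km u v = ν v * Km v u)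
include hrow hrevp hrevm

lemma sum_sum_mul_sq_add_sq (f : U → ℝ) :
    ∑ u, ∑ v, ν u * (Kp u v + Km u v) * (f u ^ 2 + f v ^ 2) = 2 * innerNu ν f f := by
  have hleft : ∑ u, ∑ v, ν u * (Kp u v + Km u v) * f u ^ 2 = innerNu ν f f := by
    refine sum_congr rfl fun u _ => ?_
    rw [← sum_mul, ← mul_sum, hrow]
    ring
  have hright : ∑ u, ∑ v, ν u * (Kp u v + Km u v) * f v ^ 2 = innerNu ν f f := by
    rw [sum_comm, ← hleft]
    exact sum_congr rfl fun v _ => sum_congr rfl fun u _ => by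
      rw [mul_add, mul_add, hrevp, hrevm]
  rw [two_mul]
  nth_rw 1 [← hleft]
  rw [← hright, ← sum_add_distrib]
  refine sum_congr rfl fun u _ => ?_
  rw [← sum_add_distrib]
  exact sum_congr rfl fun v _ => by ring

lemma sum_sum_dirichletForm (f : U → ℝ) :
    ∑ u, ∑ v, ν u * (Kp u v * (f u - f v) ^ 2 + Km u v * (f u + f v) ^ 2) =
      2 * (innerNu ν f f - innerNu ν f (signedOp Kp Km f)) := by
  rw [mul_sub, ← sum_sum_mul_sq_add_sq hrow hrevp hrevm, innerNu_signedOp, mul_sum,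
    ← sum_sub_distrib]
  refine sum_congr rfl fun u _ => ?_
  rw [mul_sum, ← sum_sub_distrib]
  exact sum_congr rfl fun v _ => by ring

theorem sq_mul_innerNu_le [DecidableEq U] (hν : ∀ u, 0 < ν u)
    (hKp : ∀ u v, 0 ≤ Kp u v) (hKm : ∀ u v, 0 ≤ Km u v) {θ : ℝ} (hθ : 0 ≤ θ)
    (hβ : ∀ S : Finset U, S.Nonempty → ∀ x : U → Bool, θ ≤ betaSigned ν Kp Km S x)
    (f : U → ℝ) :
    θ ^ 2 * innerNu ν f f ≤ 2 * (innerNu ν f f - innerNu ν f (signedOp Kp Km f)) := by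
  set x : U → Bool := fun u => decide (0 ≤ f u)
  set Q : U → U → ℝ := fun u v => ν u * (Kp u v + Km u v)
  set R : U → U → ℝ := fun u v =>
    ν u * ((if x v ≠ x u then Kp u v else 0) + (if x v = x u then Km u v else 0))
  have hQ (u v : U) : Q u v = Q v u := by simp only [Q, mul_add, hrevp u v, hrevm u v]
  have hR (u v : U) : R u v = R v u := by
    by_cases h : x v = x u <;> simp [R, h, Ne.symm, eq_comm, hrevp u v, hrevm u v]
  have hcoarea : θ * innerNu ν f f ≤ cutFunctional Q R (fun u => f u ^ 2) := by
    have := mul_sum_le_cutFunctional Q R ν θ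
      (fun S hS => mul_sum_le_of_le_betaSigned hν hS (hβ S hS x)) _ fun u => sq_nonneg (f u)
    simpa only [innerNu, sq, mul_assoc] using this
  have hpairs : θ * (2 * cutFunctional Q R (fun u => f u ^ 2)) ≤
      2 * (innerNu ν f f - innerNu ν f (signedOp Kp Km f)) + θ ^ 2 / 2 * (2 * innerNu ν f f) := by
    rw [two_mul_cutFunctional hQ hR, ← sum_sum_dirichletForm hrow hrevp hrevm,
      ← sum_sum_mul_sq_add_sq hrow hrevp hrevm]
    simp only [mul_sum, ← sum_add_distrib]
    refine sum_le_sum fun u _ => sum_le_sum fun v _ => ?_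
    have := mul_le_mul_of_nonneg_left
      (mul_signed_pair_le hθ (f u) (f v) _ _ (hKp u v) (hKm u v)) (hν u).le
    simp only [Q, R, x]
    linarith
  linarith [mul_le_mul_of_nonneg_left hcoarea hθ]

end SignedKernel

theorem LinearMap.BilinForm.IsPosSemidef.apply_sq_le {M : Type*} [AddCommGroup M] [Module ℝ M]
    {B : LinearMap.BilinForm ℝ M} (hB : B.IsPosSemidef) (x y : M) :
    B x y ^ 2 ≤ B x x * B y y := by
  have hdiscrim := discrim_le_zero (a := B y y) (b := 2 * B x y) (c := B x x) fun t => by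
    have := hB.isNonneg.nonneg (x + t • y)
    simp only [map_add, map_smul, LinearMap.add_apply, LinearMap.smul_apply, smul_eq_mul,
      hB.isSymm.eq y x] at this
    linarith
  rw [discrim] at hdiscrim
  linarith

section WeightedL2

variable {U : Type} [Fintype U] {ν : U → ℝ}

lemma innerNu_comm (f g : U → ℝ) : innerNu ν f g = innerNu ν g f :=
  sum_congr rfl fun u _ => by ring

lemma innerNu_self_nonneg (hν : ∀ u, 0 ≤ ν u) (f : U → ℝ) : 0 ≤ innerNu ν f f :=
  sum_nonneg fun u _ => by rw [mul_assoc]; exact mul_nonneg (hν u) (mul_self_nonneg _)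

lemma innerNu_eq_toBilin' [DecidableEq U] (f g : U → ℝ) :
    innerNu ν f g = Matrix.toBilin' (Matrix.diagonal ν) f g := by
  simp only [Matrix.toBilin'_apply', dotProduct, Matrix.mulVec_diagonal, innerNu]
  exact sum_congr rfl fun u _ => by ring

lemma sqrt_innerNu_iterate_le (T : (U → ℝ) → (U → ℝ)) {μ : ℝ} (hμ : 0 ≤ μ)
    (hT : ∀ f, innerNu ν (T f) (T f) ≤ μ ^ 2 * innerNu ν f f) (k : ℕ) (f : U → ℝ) :
    √(innerNu ν (T^[k] f) (T^[k] f)) ≤ μ ^ k * √(innerNu ν f f) := by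
  induction k with
  | zero => simp
  | succ k ih =>
    rw [Function.iterate_succ_apply']
    calc √(innerNu ν (T (T^[k] f)) (T (T^[k] f))) ≤ √(μ ^ 2 * innerNu ν (T^[k] f) (T^[k] f)) :=
          Real.sqrt_le_sqrt (hT _)
      _ = μ * √(innerNu ν (T^[k] f) (T^[k] f)) := by
          rw [Real.sqrt_mul (sq_nonneg μ), Real.sqrt_sq hμ]
      _ ≤ μ * (μ ^ k * √(innerNu ν f f)) := mul_le_mul_of_nonneg_left ih hμ
      _ = μ ^ (k + 1) * √(innerNu ν f f) := by ring

variable (B : (U → ℝ) →ₗ[ℝ] (U → ℝ)) (hsa : ∀ f g, innerNu ν f (B g) = innerNu ν (B f) g)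
  (hpos : ∀ f, 0 ≤ innerNu ν f (B f))
include hsa hpos

lemma innerNu_map_sq_le (f g : U → ℝ) :
    innerNu ν f (B g) ^ 2 ≤ innerNu ν f (B f) * innerNu ν g (B g) := by
  classical
  have hP : LinearMap.BilinForm.IsPosSemidef ((Matrix.toBilin' (Matrix.diagonal ν)).compl₂ B) :=
    ⟨⟨fun f g => by
        simp only [LinearMap.compl₂_apply, ← innerNu_eq_toBilin', hsa f g, innerNu_comm]⟩,
      ⟨fun f => by simpa only [LinearMap.compl₂_apply, ← innerNu_eq_toBilin'] using hpos f⟩⟩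
  simpa only [LinearMap.compl₂_apply, ← innerNu_eq_toBilin'] using hP.apply_sq_le f g

lemma innerNu_map_map_le (hν : ∀ u, 0 ≤ ν u) {μ : ℝ}
    (hle : ∀ f, innerNu ν f (B f) ≤ μ * innerNu ν f f) (f : U → ℝ) :
    innerNu ν (B f) (B f) ≤ μ ^ 2 * innerNu ν f f := by
  have hcs := innerNu_map_sq_le B hsa hpos f (B f)
  rw [hsa f (B f)] at hcs
  set P := innerNu ν (B f) (B f)
  have hP0 : 0 ≤ P := innerNu_self_nonneg hν (B f)
  have hP : P * P ≤ P * (μ ^ 2 * innerNu ν f f) := by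
    calc P * P = P ^ 2 := (sq P).symm
      _ ≤ (μ * innerNu ν f f) * (μ * P) :=
        hcs.trans (mul_le_mul (hle f) (hle (B f)) (hpos _) ((hpos f).trans (hle f)))
      _ = P * (μ ^ 2 * innerNu ν f f) := by ring
  rcases hP0.eq_or_lt with hzero | hpos'
  · rw [← hzero]
    exact mul_nonneg (sq_nonneg μ) (innerNu_self_nonneg hν f)
  · exact le_of_mul_le_mul_left hP hpos'

end WeightedL2

/-- Weighted signed dual Cheeger theorem: if the signed reversible kernel `K = (K⁺,K⁻)` has
`β(K) ≥ θ` and the operator `B = K⁺ − K⁻` is self-adjoint on `L²(ν)` with spectrum in `[0,1]`,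
then `⟨f,(I−B)f⟩_ν ≥ c_Ch θ² ‖f‖²` and `‖B^k f‖ ≤ (1 − c_Ch θ²)^k ‖f‖`. -/
theorem stmt10 :
    ∃ cCh > (0 : ℝ),
      ∀ (U : Type) [Fintype U] [DecidableEq U],
      ∀ (ν : U → ℝ) (Kp Km : U → U → ℝ),
        (∀ u, 0 < ν u) → (∑ u, ν u = 1) →
        (∀ u v, 0 ≤ Kp u v) → (∀ u v, 0 ≤ Km u v) →
        (∀ u, ∑ v, (Kp u v + Km u v) = 1) →
        (∀ u v, ν u * Kp u v = ν v * Kp v u) →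
        (∀ u v, ν u * Km u v = ν v * Km v u) →
        (∀ f g : U → ℝ, innerNu ν f (signedOp Kp Km g) = innerNu ν (signedOp Kp Km f) g) →
        (∀ f : U → ℝ, 0 ≤ innerNu ν f (signedOp Kp Km f) ∧
          innerNu ν f (signedOp Kp Km f) ≤ innerNu ν f f) →
        ∀ θ : ℝ, 0 < θ →
          (∀ S : Finset U, S.Nonempty → ∀ x : U → Bool, θ ≤ betaSigned ν Kp Km S x) →
          (∀ f : U → ℝ,
              cCh * θ ^ 2 * innerNu ν f f ≤ innerNu ν f f - innerNu ν f (signedOp Kp Km f)) ∧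
          (∀ (k : ℕ) (f : U → ℝ),
              Real.sqrt (innerNu ν ((signedOp Kp Km)^[k] f) ((signedOp Kp Km)^[k] f)) ≤
                (1 - cCh * θ ^ 2) ^ k * Real.sqrt (innerNu ν f f)) := by
  refine ⟨1 / 2, by norm_num, ?_⟩
  intro U _ _ ν Kp Km hν hν1 hKp hKm hrow hrevp hrevm hsa hspec θ hθ hβ
  have hgap (f : U → ℝ) :
      1 / 2 * θ ^ 2 * innerNu ν f f ≤ innerNu ν f f - innerNu ν f (signedOp Kp Km f) := by
    linarith [sq_mul_innerNu_le hrow hrevp hrevm hν hKp hKm hθ.le hβ f]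
  refine ⟨hgap, sqrt_innerNu_iterate_le _ ?_ fun f => ?_⟩
  · have hone : innerNu ν 1 1 = 1 := by simpa [innerNu] using hν1
    have hgap_one := hgap 1
    rw [hone] at hgap_one
    linarith [(hspec 1).1]
  · -- `signedOp Kp Km` is definitionally `Matrix.mulVecLin (Kp - Km)`
    exact innerNu_map_map_le (Matrix.mulVecLin (Kp - Km)) hsa (fun f => (hspec f).1)
      (fun u => (hν u).le)
      (fun f => show innerNu ν f (signedOp Kp Km f) ≤ _ by linarith [hgap f]) f
end
end
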